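/- arXiv:2402.02743 — 3 statements merged into one kernel-verified Lean document; each statement's English description precedes it below -/
import Mathlib

section
/- For every n ≥ 1, the number of permutations σ of {1,…,n} with exactly k excedances and m fixed points equals the number of permutations τ of {1,…,n} with exactly k jumps and m left successions. Here an excedance of σ is an index i with σ(i) > i, a fixed point is an index with σ(i) = i; setting τ(0) = 0, a left succession of τ is an index i with 1 ≤ i ≤ n and τ(i-1) + 1 = τ(i), and a jump is an index i with 1 ≤ i ≤ n and τ(i) ≥ τ(i-1) + 2. -/
open Finset

/-- The value `σ(i)` of a permutation of `{1,…,n}` at a one-based position `i`,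
with the convention `σ(0) = 0` (and value `0` outside `[1,n]`). -/
def pv {n : ℕ} (σ : Equiv.Perm (Fin n)) (i : ℕ) : ℕ :=
  if h : 1 ≤ i ∧ i ≤ n then ((σ ⟨i - 1, by omega⟩ : Fin n) : ℕ) + 1 else 0

/-- Number of excedances: indices `i` with `σ(i) > i`. -/
def exc {n : ℕ} (σ : Equiv.Perm (Fin n)) : ℕ :=
  ((Finset.Icc 1 n).filter (fun i => i < pv σ i)).card

/-- Number of fixed points: indices `i` with `σ(i) = i`. -/
def fixpt {n : ℕ} (σ : Equiv.Perm (Fin n)) : ℕ :=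
  ((Finset.Icc 1 n).filter (fun i => pv σ i = i)).card

/-- Number of left successions: indices `1 ≤ i ≤ n` with `σ(i-1) + 1 = σ(i)`. -/
def lsuc {n : ℕ} (σ : Equiv.Perm (Fin n)) : ℕ :=
  ((Finset.Icc 1 n).filter (fun i => pv σ (i - 1) + 1 = pv σ i)).card

/-- Number of jumps: indices `1 ≤ i ≤ n` with `σ(i) ≥ σ(i-1) + 2`. -/
def jump {n : ℕ} (σ : Equiv.Perm (Fin n)) : ℕ :=
  ((Finset.Icc 1 n).filter (fun i => pv σ (i - 1) + 2 ≤ pv σ i)).card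

/-!
Both pairs of statistics obey the same recurrence when a permutation of `[n]` is grown to one of
`[n + 1]`, with statistics `(e, f)` passing to the multiset `insertionKernel n (e, f)`: one
permutation with `(e, f + 1)`, `e` with `(e, f)`, `f` with `(e + 1, f - 1)` and `n - e - f` with
`(e + 1, f)`.

For `(exc, fix)`, `Perm.decomposeFin` adds a new least point `0`, either as a fixed point or
inside a cycle, where the arc `q → p` is replaced by the excedance `0 → p` and the deficiency
`q → 0`; the outcome is decided by whether `q → p` was an excedance, a fixed point or a
deficiency. For `(jump, lsuc)`, the letter `n + 1` is inserted into the word `0 τ(1) ⋯ τ(n)` after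
some letter `a`, replacing the step `a → b` by `a → n + 1 → b`: the step `n + 1 → b` is a descent,
and `a → n + 1` is a succession for the unique `a = n` and a jump otherwise; the outcome is decided
by whether `a → b` was a jump, a succession, or neither.
-/

open Equiv

theorem Multiset.map_univ_val_eq_bind {α β γ δ : Type*} [Fintype α] [Fintype β] [Fintype γ]
    (e : α × β ≃ γ) (g : γ → δ) :
    (univ : Finset γ).val.map g =
      (univ : Finset α).val.bind fun a => (univ : Finset β).val.map fun b => g (e (a, b)) := by
  rw [← Multiset.map_univ_val_equiv e, Multiset.map_map, ← Finset.univ_product_univ,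
    Finset.product_val]
  simp [SProd.sprod, Multiset.product, Multiset.map_bind, Multiset.map_map]

theorem card_filter_Icc_one (n : ℕ) (P : ℕ → Prop) [DecidablePred P] :
    #{i ∈ Icc 1 n | P i} = #{i : Fin n | P (i + 1)} := by
  rw [card_filter, card_filter, Fin.sum_univ_eq_sum_range (fun i => if P (i + 1) then 1 else 0),
    range_eq_Ico, sum_Ico_add' (fun i => if P i then 1 else 0), zero_add,
    Ico_add_one_right_eq_Icc]

theorem card_filter_ne_add_ite {α : Type*} [Fintype α] [DecidableEq α] (P : α → Prop)
    [DecidablePred P] (a : α) : #{x | x ≠ a ∧ P x} + (if P a then 1 else 0) = #{x | P x} := by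
  have : ({x | x ≠ a ∧ P x} : Finset α) = ({x | P x} : Finset α).erase a := by
    ext x; simp [and_comm]
  split_ifs with ha
  · rw [this, card_erase_add_one (by simpa using ha)]
  · rw [this, erase_eq_of_notMem (by simpa using ha), add_zero]

def insertionKernel (n : ℕ) (s : ℕ × ℕ) : Multiset (ℕ × ℕ) :=
  (s.1, s.2 + 1) ::ₘ (Multiset.replicate s.1 s + Multiset.replicate s.2 (s.1 + 1, s.2 - 1) +
    Multiset.replicate (n - s.1 - s.2) (s.1 + 1, s.2))

theorem map_univ_val_eq_insertionKernel {α : Type*} [Fintype α] [DecidableEq α] {n e f : ℕ}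
    (hcard : Fintype.card α = n + 1) (h : α → ℕ × ℕ) (a₀ : α) (K F : Finset α)
    (hK : #K = e) (hF : #F = f) (h₀ : h a₀ = (e, f + 1)) (hKv : ∀ a ∈ K, h a = (e, f))
    (hFv : ∀ a ∈ F, h a = (e + 1, f - 1))
    (hrest : ∀ a, a ≠ a₀ → a ∉ K → a ∉ F → h a = (e + 1, f)) :
    univ.val.map h = insertionKernel n (e, f) := by
  have ha₀K : a₀ ∉ K := fun ha => by simpa [h₀] using hKv a₀ ha
  have ha₀F : a₀ ∉ F := fun ha => by simpa [h₀] using hFv a₀ ha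
  have hKF : Disjoint K F := disjoint_left.2 fun a haK haF => by
    simpa [hKv a haK] using hFv a haF
  have hsub : K ∪ F ⊆ univ.erase a₀ := fun a ha => by
    rw [mem_erase]
    refine ⟨?_, mem_univ a⟩
    rintro rfl
    rcases mem_union.1 ha with ha | ha <;> contradiction
  set R := (univ.erase a₀) \ (K ∪ F)
  have hRv : ∀ a ∈ R, h a = (e + 1, f) := fun a ha => by
    simp only [R, mem_sdiff, mem_erase, mem_union, not_or] at ha
    exact hrest a ha.1.1 ha.2.1 ha.2.2
  have hR : #R = n - e - f := by
    rw [card_sdiff_of_subset hsub, card_erase_of_mem (mem_univ a₀), card_univ, hcard,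
      card_union_of_disjoint hKF, hK, hF]
    omega
  have sum_const_on : ∀ (s : Finset α) (v : ℕ × ℕ), (∀ a ∈ s, h a = v) →
      ∑ a ∈ s, ({h a} : Multiset (ℕ × ℕ)) = Multiset.replicate #s v := fun s v hv => by
    rw [sum_congr rfl fun a ha => congrArg _ (hv a ha), sum_const, Multiset.nsmul_singleton]
  calc univ.val.map h = ∑ a, ({h a} : Multiset (ℕ × ℕ)) := by
        rw [← Multiset.sum_map_singleton (univ.val.map h), Multiset.map_map]; rfl
    _ = {h a₀} + (∑ a ∈ R, {h a} + (∑ a ∈ K, {h a} + ∑ a ∈ F, {h a})) := by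
        rw [← add_sum_erase _ _ (mem_univ a₀), ← sum_union hKF, sum_sdiff hsub]
    _ = insertionKernel n (e, f) := by
        rw [sum_const_on _ _ hKv, sum_const_on _ _ hFv, sum_const_on _ _ hRv, hK, hF, hR, h₀,
          insertionKernel, Multiset.singleton_add]
        exact congrArg _ (add_comm _ _)

section Permutation

variable {n : ℕ}

theorem pv_zero (σ : Perm (Fin n)) : pv σ 0 = 0 := by
  simp [pv]

theorem pv_succ (σ : Perm (Fin n)) (i : Fin n) : pv σ (i + 1) = σ i + 1 := by
  simp [pv, i.isLt]

theorem pv_le (σ : Perm (Fin n)) (i : ℕ) : pv σ i ≤ n := by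
  unfold pv; split_ifs <;> omega

theorem pv_injOn (σ : Perm (Fin n)) : Set.InjOn (pv σ) (Set.Iic n) := by
  have pv_add_one : ∀ {i} (hi : i < n), pv σ (i + 1) = σ ⟨i, hi⟩ + 1 :=
    fun {i} hi => pv_succ σ ⟨i, hi⟩
  rintro (_ | i) hi (_ | j) hj h <;> simp only [Set.mem_Iic] at hi hj
  · rfl
  · rw [pv_zero, pv_add_one (by omega : j < n)] at h
    omega
  · rw [pv_zero, pv_add_one (by omega : i < n)] at h
    omega
  · rw [pv_add_one (by omega : i < n), pv_add_one (by omega : j < n), add_left_inj,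
      Fin.val_inj, σ.injective.eq_iff, Fin.mk.injEq] at h
    rw [h]

theorem exists_pv_eq (σ : Perm (Fin n)) : ∃ j : Fin (n + 1), pv σ j = n := by
  cases n with
  | zero => exact ⟨0, pv_zero σ⟩
  | succ m => exact ⟨(σ.symm (Fin.last m)).succ, by simp [pv_succ]⟩

theorem exc_eq_card (σ : Perm (Fin n)) : exc σ = #{i | i < σ i} := by
  simp only [exc, card_filter_Icc_one, pv_succ, add_lt_add_iff_right, Fin.lt_def]

theorem fixpt_eq_card (σ : Perm (Fin n)) : fixpt σ = #{i | σ i = i} := by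
  simp only [fixpt, card_filter_Icc_one, pv_succ, add_left_inj, Fin.ext_iff]

theorem card_filter_decomposeFin_symm (R : Fin (n + 1) → Fin (n + 1) → Prop) [DecidableRel R]
    (hR : ∀ i : Fin n, ¬ R i.succ 0) (p : Fin (n + 1)) (σ : Perm (Fin n)) :
    #{x | R x (Perm.decomposeFin.symm (p, σ) x)} =
      (if R 0 p then 1 else 0) + #{i | (σ i).succ ≠ p ∧ R i.succ (σ i).succ} := by
  rw [card_filter, card_filter, Fin.sum_univ_succ, Perm.decomposeFin_symm_apply_zero]
  congr 1
  refine sum_congr rfl fun i _ => ?_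
  rw [Perm.decomposeFin_symm_apply_succ]
  by_cases hp : (σ i).succ = p
  · simp [← hp, hR]
  · rw [swap_apply_of_ne_of_ne (Fin.succ_ne_zero _) hp]
    simp [hp]

theorem exc_decomposeFin_symm_zero (σ : Perm (Fin n)) :
    exc (Perm.decomposeFin.symm (0, σ)) = exc σ := by
  rw [exc_eq_card, exc_eq_card, card_filter_decomposeFin_symm (· < ·) (fun i => by simp)]
  simp [Fin.succ_ne_zero]

theorem fixpt_decomposeFin_symm_zero (σ : Perm (Fin n)) :
    fixpt (Perm.decomposeFin.symm (0, σ)) = fixpt σ + 1 := by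
  rw [fixpt_eq_card, fixpt_eq_card,
    card_filter_decomposeFin_symm (fun x y => y = x) (fun i => Fin.succ_ne_zero i ∘ Eq.symm)]
  simp [Fin.succ_ne_zero, add_comm]

theorem exc_decomposeFin_symm_succ (σ : Perm (Fin n)) (i : Fin n) :
    exc (Perm.decomposeFin.symm ((σ i).succ, σ)) + (if i < σ i then 1 else 0) = exc σ + 1 := by
  rw [exc_eq_card, exc_eq_card, card_filter_decomposeFin_symm (· < ·) (fun i => by simp),
    ← card_filter_ne_add_ite (fun j => j < σ j) i]
  simp only [if_pos (Fin.succ_pos _), ne_eq, Fin.succ_inj, Fin.succ_lt_succ_iff,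
    σ.injective.eq_iff]
  ring

theorem fixpt_decomposeFin_symm_succ (σ : Perm (Fin n)) (i : Fin n) :
    fixpt (Perm.decomposeFin.symm ((σ i).succ, σ)) + (if σ i = i then 1 else 0) = fixpt σ := by
  rw [fixpt_eq_card, fixpt_eq_card,
    card_filter_decomposeFin_symm (fun x y => y = x) (fun i => Fin.succ_ne_zero i ∘ Eq.symm),
    ← card_filter_ne_add_ite (fun j => σ j = j) i]
  simp

theorem exc_fixpt_decomposeFin_symm_succ (σ : Perm (Fin n)) (i : Fin n) :
    (exc (Perm.decomposeFin.symm ((σ i).succ, σ)),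
        fixpt (Perm.decomposeFin.symm ((σ i).succ, σ))) =
      if i < σ i then (exc σ, fixpt σ)
      else if σ i = i then (exc σ + 1, fixpt σ - 1)
      else (exc σ + 1, fixpt σ) := by
  have he := exc_decomposeFin_symm_succ σ i
  have hf := fixpt_decomposeFin_symm_succ σ i
  split_ifs at he hf ⊢ with hlt heq
  · exact absurd heq hlt.ne'
  all_goals ext <;> simp only <;> omega

theorem map_exc_fixpt_decomposeFin_symm (σ : Perm (Fin n)) :
    univ.val.map (fun p => (exc (Perm.decomposeFin.symm (p, σ)),
      fixpt (Perm.decomposeFin.symm (p, σ)))) = insertionKernel n (exc σ, fixpt σ) := by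
  have hsucc : Function.Injective fun i => (σ i).succ := (Fin.succ_injective n).comp σ.injective
  refine map_univ_val_eq_insertionKernel (Fintype.card_fin _) _ 0
    (({i | i < σ i} : Finset (Fin n)).image fun i => (σ i).succ)
    (({i | σ i = i} : Finset (Fin n)).image fun i => (σ i).succ)
    (by rw [card_image_of_injective _ hsucc, exc_eq_card])
    (by rw [card_image_of_injective _ hsucc, fixpt_eq_card])
    (by rw [exc_decomposeFin_symm_zero, fixpt_decomposeFin_symm_zero]) ?_ ?_ ?_
  · simp only [mem_image, mem_filter, mem_univ, true_and, forall_exists_index, and_imp]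
    rintro _ i hi rfl
    rw [exc_fixpt_decomposeFin_symm_succ, if_pos hi]
  · simp only [mem_image, mem_filter, mem_univ, true_and, forall_exists_index, and_imp]
    rintro _ i hi rfl
    rw [exc_fixpt_decomposeFin_symm_succ, if_neg hi.not_gt, if_pos hi]
  · intro p hp0 hpK hpF
    obtain ⟨q, rfl⟩ := Fin.exists_succ_eq.2 hp0
    obtain ⟨i, rfl⟩ := σ.surjective q
    have hexc : ¬ i < σ i := fun hi => hpK (mem_image_of_mem _ (by simpa using hi))
    have hfix : σ i ≠ i := fun hi => hpF (mem_image_of_mem _ (by simpa using hi))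
    rw [exc_fixpt_decomposeFin_symm_succ, if_neg hexc, if_neg hfix]

end Permutation

theorem map_exc_fixpt_succ (n : ℕ) :
    univ.val.map (fun σ : Perm (Fin (n + 1)) => (exc σ, fixpt σ)) =
      (univ.val.map fun σ : Perm (Fin n) => (exc σ, fixpt σ)).bind (insertionKernel n) := by
  rw [Multiset.map_univ_val_eq_bind ((Equiv.prodComm _ _).trans Perm.decomposeFin.symm),
    Multiset.bind_map]
  exact Multiset.bind_congr fun σ _ => map_exc_fixpt_decomposeFin_symm σ

section Adjacent

def insertAt (u : ℕ → ℕ) (j x : ℕ) : ℕ → ℕ :=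
  fun i => if i ≤ j then u i else if i = j + 1 then x else u (i - 1)

def countAdjacent (R : ℕ → ℕ → Prop) [DecidableRel R] (u : ℕ → ℕ) (N : ℕ) : ℕ :=
  #{i ∈ Icc 1 N | R (u (i - 1)) (u i)}

variable (R : ℕ → ℕ → Prop) [DecidableRel R] (u : ℕ → ℕ)

theorem countAdjacent_succ (N : ℕ) :
    countAdjacent R u (N + 1) = countAdjacent R u N + if R (u N) (u (N + 1)) then 1 else 0 := by
  simp only [countAdjacent, card_filter, sum_Icc_succ_top (Nat.le_add_left 1 N),
    Nat.add_sub_cancel]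

theorem countAdjacent_insertAt {j N x : ℕ} (hjN : j ≤ N) (hx : ¬ R x (u (j + 1))) :
    countAdjacent R (insertAt u j x) (N + 1) + (if j < N ∧ R (u j) (u (j + 1)) then 1 else 0) =
      countAdjacent R u N + if R (u j) x then 1 else 0 := by
  induction N, hjN using Nat.le_induction with
  | base =>
    have hlow : countAdjacent R (insertAt u j x) j = countAdjacent R u j :=
      congrArg card <| filter_congr fun i hi => by
        simp only [mem_Icc] at hi
        simp [insertAt, hi.2, Nat.sub_le_of_le_add (Nat.le_add_right_of_le hi.2)]
    simp [countAdjacent_succ R (insertAt u j x), hlow, insertAt]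
  | succ N hjN ih =>
    rw [countAdjacent_succ R (insertAt u j x), countAdjacent_succ R u]
    rcases hjN.eq_or_lt with rfl | hlt
    · have h1 : insertAt u j x (j + 1) = x := by simp [insertAt]
      have h2 : insertAt u j x (j + 1 + 1) = u (j + 1) := by simp [insertAt]
      simp only [h1, h2, if_neg hx, lt_irrefl, false_and, if_false, Nat.lt_add_one, true_and]
        at ih ⊢
      omega
    · have h1 : insertAt u j x (N + 1) = u N := by
        rw [insertAt, if_neg (by omega), if_neg (by omega), Nat.add_sub_cancel]
      have h2 : insertAt u j x (N + 1 + 1) = u (N + 1) := by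
        rw [insertAt, if_neg (by omega), if_neg (by omega), Nat.add_sub_cancel]
      simp only [h1, h2, hlt, hlt.trans (Nat.lt_add_one N), true_and] at ih ⊢
      omega

end Adjacent

section InsertMax

variable {n : ℕ}

/-- The word `τ` with the new largest letter `Fin.last n` inserted at position `j`. -/
def insertMax (τ : Perm (Fin n)) (j : Fin (n + 1)) : Perm (Fin (n + 1)) :=
  (finSuccEquiv' j).trans ((optionCongr τ).trans finSuccEquivLast.symm)

@[simp]
theorem insertMax_apply_self (τ : Perm (Fin n)) (j : Fin (n + 1)) :
    insertMax τ j j = Fin.last n := by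
  simp [insertMax]

@[simp]
theorem insertMax_apply_succAbove (τ : Perm (Fin n)) (j : Fin (n + 1)) (k : Fin n) :
    insertMax τ j (j.succAbove k) = (τ k).castSucc := by
  simp [insertMax]

theorem insertMax_injective :
    Function.Injective fun x : Perm (Fin n) × Fin (n + 1) => insertMax x.1 x.2 := by
  rintro ⟨τ₁, j₁⟩ ⟨τ₂, j₂⟩ h
  simp only at h
  have hj : j₁ = j₂ := by
    by_contra hne
    obtain ⟨k, hk⟩ := Fin.exists_succAbove_eq hne
    have := insertMax_apply_self τ₁ j₁
    rw [h, ← hk, insertMax_apply_succAbove] at this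
    exact Fin.castSucc_ne_last _ this
  subst hj
  refine Prod.ext (Equiv.ext fun k => Fin.castSucc_injective n ?_) rfl
  rw [← insertMax_apply_succAbove τ₁ j₁, h, insertMax_apply_succAbove]

theorem insertMax_bijective :
    Function.Bijective fun x : Perm (Fin n) × Fin (n + 1) => insertMax x.1 x.2 := by
  refine (Fintype.bijective_iff_injective_and_card _).2 ⟨insertMax_injective, ?_⟩
  rw [Fintype.card_prod, Fintype.card_perm, Fintype.card_perm, Fintype.card_fin,
    Fintype.card_fin, Nat.factorial_succ, mul_comm]

theorem pv_insertMax (τ : Perm (Fin n)) (j : Fin (n + 1)) :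
    pv (insertMax τ j) = insertAt (pv τ) j (n + 1) := by
  funext i
  by_cases hi : 1 ≤ i ∧ i ≤ n + 1
  · obtain ⟨x, hx⟩ : ∃ x : Fin (n + 1), (x : ℕ) = i - 1 := ⟨⟨i - 1, by omega⟩, rfl⟩
    have hpv : pv (insertMax τ j) i = insertMax τ j x + 1 := by
      rw [pv, dif_pos hi]
      congr
      exact hx.symm
    rw [hpv]
    rcases eq_or_ne x j with rfl | hxj
    · rw [insertMax_apply_self, Fin.val_last, insertAt, if_neg (by omega), if_pos (by omega)]
    · obtain ⟨k, rfl⟩ := Fin.exists_succAbove_eq hxj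
      rw [insertMax_apply_succAbove, Fin.val_castSucc]
      rcases lt_or_ge k.castSucc j with hkj | hkj
      · rw [Fin.succAbove_of_castSucc_lt _ _ hkj, Fin.val_castSucc] at hx
        rw [Fin.lt_def, Fin.val_castSucc] at hkj
        rw [insertAt, if_pos (by omega), show i = k + 1 by omega, pv_succ]
      · rw [Fin.succAbove_of_le_castSucc _ _ hkj, Fin.val_succ] at hx
        rw [Fin.le_def, Fin.val_castSucc] at hkj
        rw [insertAt, if_neg (by omega), if_neg (by omega), show i - 1 = k + 1 by omega, pv_succ]
  · rw [pv, dif_neg hi, insertAt]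
    split_ifs with hij
    · rw [show i = 0 by omega, pv, dif_neg (by omega)]
    · omega
    · rw [pv, dif_neg (by omega)]

theorem jump_eq_countAdjacent (σ : Perm (Fin n)) :
    jump σ = countAdjacent (fun a b => a + 2 ≤ b) (pv σ) n := rfl

theorem lsuc_eq_countAdjacent (σ : Perm (Fin n)) :
    lsuc σ = countAdjacent (fun a b => a + 1 = b) (pv σ) n := rfl

theorem jump_insertMax (τ : Perm (Fin n)) (j : Fin (n + 1)) :
    jump (insertMax τ j) + (if (j : ℕ) < n ∧ pv τ j + 2 ≤ pv τ (j + 1) then 1 else 0) =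
      jump τ + if pv τ j < n then 1 else 0 := by
  have key := countAdjacent_insertAt (fun a b => a + 2 ≤ b) (pv τ) (Nat.le_of_lt_succ j.isLt)
    (x := n + 1) (by have := pv_le τ (j + 1); omega)
  have hlt : pv τ j + 2 ≤ n + 1 ↔ pv τ j < n := by omega
  rw [jump_eq_countAdjacent, jump_eq_countAdjacent, pv_insertMax]
  simpa only [hlt] using key

theorem lsuc_insertMax (τ : Perm (Fin n)) (j : Fin (n + 1)) :
    lsuc (insertMax τ j) + (if (j : ℕ) < n ∧ pv τ j + 1 = pv τ (j + 1) then 1 else 0) =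
      lsuc τ + if pv τ j = n then 1 else 0 := by
  have key := countAdjacent_insertAt (fun a b => a + 1 = b) (pv τ) (Nat.le_of_lt_succ j.isLt)
    (x := n + 1) (by have := pv_le τ (j + 1); omega)
  rw [lsuc_eq_countAdjacent, lsuc_eq_countAdjacent, pv_insertMax]
  simpa only [add_left_inj] using key

theorem jump_lsuc_insertMax (τ : Perm (Fin n)) (j : Fin (n + 1)) :
    (jump (insertMax τ j), lsuc (insertMax τ j)) =
      if pv τ j = n then (jump τ, lsuc τ + 1)
      else if (j : ℕ) < n ∧ pv τ j + 2 ≤ pv τ (j + 1) then (jump τ, lsuc τ)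
      else if (j : ℕ) < n ∧ pv τ j + 1 = pv τ (j + 1) then (jump τ + 1, lsuc τ - 1)
      else (jump τ + 1, lsuc τ) := by
  have hj := jump_insertMax τ j
  have hl := lsuc_insertMax τ j
  have := pv_le τ j
  have := pv_le τ (j + 1)
  split_ifs at hj hl ⊢ <;> ext <;> simp only <;> omega

theorem map_jump_lsuc_insertMax (τ : Perm (Fin n)) :
    univ.val.map (fun j => (jump (insertMax τ j), lsuc (insertMax τ j))) =
      insertionKernel n (jump τ, lsuc τ) := by
  obtain ⟨j₀, hj₀⟩ := exists_pv_eq τ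
  refine map_univ_val_eq_insertionKernel (Fintype.card_fin _) _ j₀
    (({i | pv τ i + 2 ≤ pv τ (i + 1)} : Finset (Fin n)).image Fin.castSucc)
    (({i | pv τ i + 1 = pv τ (i + 1)} : Finset (Fin n)).image Fin.castSucc)
    (by rw [card_image_of_injective _ (Fin.castSucc_injective n), jump, card_filter_Icc_one]
        simp only [Nat.add_sub_cancel])
    (by rw [card_image_of_injective _ (Fin.castSucc_injective n), lsuc, card_filter_Icc_one]
        simp only [Nat.add_sub_cancel])
    (by rw [jump_lsuc_insertMax, if_pos hj₀]) ?_ ?_ ?_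
  · simp only [mem_image, mem_filter, mem_univ, true_and, forall_exists_index, and_imp]
    rintro _ i hi rfl
    have := pv_le τ (i + 1)
    rw [jump_lsuc_insertMax, Fin.val_castSucc, if_neg (by omega), if_pos ⟨i.isLt, hi⟩]
  · simp only [mem_image, mem_filter, mem_univ, true_and, forall_exists_index, and_imp]
    rintro _ i hi rfl
    have := pv_le τ (i + 1)
    rw [jump_lsuc_insertMax, Fin.val_castSucc, if_neg (by omega), if_neg (by omega),
      if_pos ⟨i.isLt, hi⟩]
  · intro j hj₀' hjK hjF
    have hne : pv τ j ≠ n := fun h => hj₀' <| Fin.ext <|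
      pv_injOn τ (Nat.le_of_lt_succ j.isLt) (Nat.le_of_lt_succ j₀.isLt) (h.trans hj₀.symm)
    have hK : ¬ ((j : ℕ) < n ∧ pv τ j + 2 ≤ pv τ (j + 1)) := fun ⟨hjn, h⟩ =>
      hjK (mem_image.2 ⟨⟨j, hjn⟩, by simpa using h, rfl⟩)
    have hF : ¬ ((j : ℕ) < n ∧ pv τ j + 1 = pv τ (j + 1)) := fun ⟨hjn, h⟩ =>
      hjF (mem_image.2 ⟨⟨j, hjn⟩, by simpa using h, rfl⟩)
    rw [jump_lsuc_insertMax, if_neg hne, if_neg hK, if_neg hF]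

end InsertMax

theorem map_jump_lsuc_succ (n : ℕ) :
    univ.val.map (fun τ : Perm (Fin (n + 1)) => (jump τ, lsuc τ)) =
      (univ.val.map fun τ : Perm (Fin n) => (jump τ, lsuc τ)).bind (insertionKernel n) := by
  rw [Multiset.map_univ_val_eq_bind (Equiv.ofBijective _ insertMax_bijective), Multiset.bind_map]
  exact Multiset.bind_congr fun τ _ => map_jump_lsuc_insertMax τ

theorem map_exc_fixpt_eq_map_jump_lsuc (n : ℕ) :
    univ.val.map (fun σ : Perm (Fin n) => (exc σ, fixpt σ)) =
      univ.val.map fun τ : Perm (Fin n) => (jump τ, lsuc τ) := by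
  induction n with
  | zero => exact Multiset.map_congr rfl fun σ _ => by simp [exc, fixpt, jump, lsuc]
  | succ n ih => rw [map_exc_fixpt_succ, map_jump_lsuc_succ, ih]

theorem exc_fix_equidistributed_jump_lsuc_general (n k m : ℕ) :
    ((Finset.univ : Finset (Equiv.Perm (Fin n))).filter
        (fun σ => exc σ = k ∧ fixpt σ = m)).card =
    ((Finset.univ : Finset (Equiv.Perm (Fin n))).filter
        (fun τ => jump τ = k ∧ lsuc τ = m)).card := by
  have h := congrArg (Multiset.count (k, m)) (map_exc_fixpt_eq_map_jump_lsuc n)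
  simp only [Multiset.count_map, Prod.mk.injEq, eq_comm (a := k), eq_comm (a := m)] at h
  exact h

theorem exc_fix_equidistributed_jump_lsuc (n k m : ℕ) (hn : 1 ≤ n) :
    ((Finset.univ : Finset (Equiv.Perm (Fin n))).filter
        (fun σ => exc σ = k ∧ fixpt σ = m)).card =
    ((Finset.univ : Finset (Equiv.Perm (Fin n))).filter
        (fun τ => jump τ = k ∧ lsuc τ = m)).card :=
  exc_fix_equidistributed_jump_lsuc_general n k m
end

section
/- For every n ≥ 1, the triple of statistics (jump, des, lsuc) is equidistributed with the triple (exc, drop, fix) over the symmetric group S_n; that is, for all nonnegative integers j, d, l, the number of σ ∈ S_n with jump(σ)=j, des(σ)=d, lsuc(σ)=l equals the number of τ ∈ S_n with exc(τ)=j, drop(τ)=d, fix(τ)=l. -/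
open Finset

/-- Number of drops: indices `i` with `σ(i) < i`. -/
def dropStat {n : ℕ} (σ : Equiv.Perm (Fin n)) : ℕ :=
  ((Finset.Icc 1 n).filter (fun i => pv σ i < i)).card

/-- Number of descents: indices `1 ≤ i ≤ n-1` with `σ(i) > σ(i+1)`. -/
def des {n : ℕ} (σ : Equiv.Perm (Fin n)) : ℕ :=
  ((Finset.Icc 1 (n - 1)).filter (fun i => pv σ (i + 1) < pv σ i)).card

namespace JDL
open Equiv
variable {n : ℕ}
theorem pv_zero (σ : Perm (Fin n)) : pv σ 0 = 0 := by simp [pv]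
theorem pv_of_le (σ : Perm (Fin n)) {i : ℕ} (h1 : 1 ≤ i) (h2 : i ≤ n) :
    pv σ i = (σ ⟨i - 1, by omega⟩ : Fin n) + 1 := by
  rw [pv, dif_pos ⟨h1, h2⟩]
theorem pv_bounds (σ : Perm (Fin n)) {i : ℕ} (h1 : 1 ≤ i) (h2 : i ≤ n) :
    1 ≤ pv σ i ∧ pv σ i ≤ n := by
  rw [pv_of_le σ h1 h2]
  have := (σ ⟨i - 1, by omega⟩).isLt
  omega
theorem pv_le (σ : Perm (Fin n)) (i : ℕ) : pv σ i ≤ n := by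
  by_cases h : 1 ≤ i ∧ i ≤ n
  · exact (pv_bounds σ h.1 h.2).2
  · rw [pv, dif_neg h]; omega
theorem pv_symm_pv (σ : Perm (Fin n)) {i : ℕ} (h : i ≤ n) :
    pv σ.symm (pv σ i) = i := by
  rcases Nat.eq_zero_or_pos i with rfl | hi
  · simp [pv]
  · have hb := pv_bounds σ hi h
    rw [pv_of_le σ hi h, pv_of_le σ.symm (by omega) (by omega)]
    have : (⟨(σ ⟨i - 1, by omega⟩ : Fin n) + 1 - 1, by omega⟩ : Fin n) = σ ⟨i - 1, by omega⟩ := by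
      apply Fin.ext; simp
    rw [this, Equiv.symm_apply_apply]
    simp; omega
theorem pv_pv_symm (σ : Perm (Fin n)) {y : ℕ} (h : y ≤ n) :
    pv σ (pv σ.symm y) = y := by
  rcases Nat.eq_zero_or_pos y with rfl | hy
  · simp [pv]
  · have hb := pv_bounds σ.symm hy h
    rw [pv_of_le σ.symm hy h, pv_of_le σ (by omega) (by omega)]
    have : (⟨(σ.symm ⟨y - 1, by omega⟩ : Fin n) + 1 - 1, by omega⟩ : Fin n)
        = σ.symm ⟨y - 1, by omega⟩ := by apply Fin.ext; simp
    rw [this, Equiv.apply_symm_apply]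
    simp; omega
theorem pv_inj (σ : Perm (Fin n)) {i j : ℕ} (hi : i ≤ n) (hj : j ≤ n)
    (e : pv σ i = pv σ j) : i = j := by
  have := pv_symm_pv σ hi
  rw [e, pv_symm_pv σ hj] at this
  omega

/-- position of the letter `n` in the word (i.e. `W p = n`). -/
def pd (σ : Perm (Fin n)) : ℕ := pv σ.symm n

theorem W_pd (σ : Perm (Fin n)) (hn : 0 < n) : pv σ (pd σ) = n :=
  pv_pv_symm σ le_rfl

theorem pd_le (σ : Perm (Fin n)) : pd σ ≤ n := pv_le σ.symm n

theorem pd_pos (σ : Perm (Fin n)) (hn : 0 < n) : 0 < pd σ := by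
  rcases Nat.eq_zero_or_pos (pd σ) with h | h
  · have := W_pd σ hn
    rw [h, pv_zero] at this
    omega
  · exact h

/-- running minimum of the word on `(p, i]`. -/
def mvd (σ : Perm (Fin n)) (i : ℕ) : ℕ :=
  (insert (pv σ (pd σ + 1)) ((Finset.Ioc (pd σ) i).image (pv σ))).min'
    (Finset.insert_nonempty _ _)

theorem mvd_eq (σ : Perm (Fin n)) {i : ℕ} (h : pd σ < i) :
    mvd σ i = (((Finset.Ioc (pd σ) i).image (pv σ))).min'
      ⟨_, Finset.mem_image_of_mem _ (Finset.mem_Ioc.mpr ⟨Nat.lt_succ_self _, h⟩)⟩ := by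
  unfold mvd
  congr 1
  exact Finset.insert_eq_self.mpr
    (Finset.mem_image_of_mem _ (Finset.mem_Ioc.mpr ⟨Nat.lt_succ_self _, h⟩))

theorem mvd_le (σ : Perm (Fin n)) {i k : ℕ} (h1 : pd σ < k) (h2 : k ≤ i) :
    mvd σ i ≤ pv σ k := by
  rw [mvd_eq σ (lt_of_lt_of_le h1 h2)]
  exact Finset.min'_le _ _ (Finset.mem_image_of_mem _ (Finset.mem_Ioc.mpr ⟨h1, h2⟩))

theorem mvd_mem (σ : Perm (Fin n)) {i : ℕ} (h : pd σ < i) :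
    ∃ k, pd σ < k ∧ k ≤ i ∧ pv σ k = mvd σ i := by
  rw [mvd_eq σ h]
  have := Finset.min'_mem (((Finset.Ioc (pd σ) i).image (pv σ)))
    ⟨_, Finset.mem_image_of_mem _ (Finset.mem_Ioc.mpr ⟨Nat.lt_succ_self _, h⟩)⟩
  rw [Finset.mem_image] at this
  obtain ⟨k, hk, e⟩ := this
  rw [Finset.mem_Ioc] at hk
  exact ⟨k, hk.1, hk.2, e⟩

theorem mvd_anti (σ : Perm (Fin n)) {i i' : ℕ} (h : pd σ < i) (h2 : i ≤ i') :
    mvd σ i' ≤ mvd σ i := by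
  obtain ⟨k, hk1, hk2, e⟩ := mvd_mem σ h
  rw [← e]
  exact mvd_le σ hk1 (le_trans hk2 h2)

theorem mvd_bounds (σ : Perm (Fin n)) {i : ℕ} (h : pd σ < i) (hi : i ≤ n) :
    1 ≤ mvd σ i ∧ mvd σ i ≤ n := by
  obtain ⟨k, hk1, hk2, e⟩ := mvd_mem σ h
  rw [← e]
  exact pv_bounds σ (by omega) (by omega)


/-- the permutation `c'` of `{0,…,n}`, described on letters. -/
def fd (σ : Perm (Fin n)) (y : ℕ) : ℕ :=
  if pv σ.symm y < pd σ then pv σ (pv σ.symm y + 1)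
  else if pv σ.symm y = pd σ then 0
  else if pv σ.symm y < n ∧ mvd σ (pv σ.symm y) < pv σ (pv σ.symm y + 1) then
    pv σ (pv σ.symm y + 1)
  else mvd σ (pv σ.symm y)

theorem fd_lt (σ : Perm (Fin n)) {i : ℕ} (hi : i ≤ n) (h : i < pd σ) :
    fd σ (pv σ i) = pv σ (i + 1) := by
  rw [fd, pv_symm_pv σ hi, if_pos h]

theorem fd_p (σ : Perm (Fin n)) (hn : 0 < n) : fd σ n = 0 := by
  have h : pv σ.symm n = pd σ := rfl
  rw [fd, h, if_neg (lt_irrefl _), if_pos rfl]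

theorem fd_asc (σ : Perm (Fin n)) {i : ℕ} (hi : i ≤ n) (h : pd σ < i)
    (h2 : i < n) (h3 : mvd σ i < pv σ (i + 1)) :
    fd σ (pv σ i) = pv σ (i + 1) := by
  rw [fd, pv_symm_pv σ hi, if_neg (by omega), if_neg (by omega), if_pos ⟨h2, h3⟩]

theorem fd_else (σ : Perm (Fin n)) {i : ℕ} (hi : i ≤ n) (h : pd σ < i)
    (h2 : ¬(i < n ∧ mvd σ i < pv σ (i + 1))) :
    fd σ (pv σ i) = mvd σ i := by
  rw [fd, pv_symm_pv σ hi, if_neg (by omega), if_neg (by omega), if_neg h2]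

/-- trichotomy: in the suffix, `W (i+1) ≠ mvd i`. -/
theorem W_ne_mvd (σ : Perm (Fin n)) {i : ℕ} (h : pd σ < i) (h2 : i < n) :
    pv σ (i + 1) ≠ mvd σ i := by
  intro e
  obtain ⟨k, hk1, hk2, e2⟩ := mvd_mem σ h
  rw [← e2] at e
  have := pv_inj σ (by omega) (by omega) e
  omega

theorem fd_desc (σ : Perm (Fin n)) {i : ℕ} (h : pd σ < i)
    (h2 : i < n) (h3 : pv σ (i + 1) < mvd σ i) :
    fd σ (pv σ i) = mvd σ i :=
  fd_else σ (by omega) h (by omega)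

theorem fd_last (σ : Perm (Fin n)) (h : pd σ < n) :
    fd σ (pv σ n) = mvd σ n :=
  fd_else σ le_rfl h (by omega)

theorem fd_bounds (σ : Perm (Fin n)) {i : ℕ} (hi : i ≤ n) (h : i ≠ pd σ) :
    1 ≤ fd σ (pv σ i) ∧ fd σ (pv σ i) ≤ n := by
  rcases lt_trichotomy i (pd σ) with hc | hc | hc
  · rw [fd_lt σ hi hc]
    have := pd_le σ
    exact pv_bounds σ (by omega) (by omega)
  · exact absurd hc h
  · by_cases h2 : i < n ∧ mvd σ i < pv σ (i + 1)
    · rw [fd_asc σ hi hc h2.1 h2.2]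
      exact pv_bounds σ (by omega) (by omega)
    · rw [fd_else σ hi hc h2]
      exact mvd_bounds σ hc hi

theorem fd_bounds' (σ : Perm (Fin n)) {y : ℕ} (hy : y ≤ n) (h : y ≠ n) :
    1 ≤ fd σ y ∧ fd σ y ≤ n := by
  have hn : 0 < n := by omega
  have h1 : pv σ (pv σ.symm y) = y := pv_pv_symm σ hy
  have h2 : pv σ.symm y ≤ n := pv_le σ.symm y
  have h3 : pv σ.symm y ≠ pd σ := by
    intro e
    rw [e, W_pd σ hn] at h1
    omega
  rw [← h1]
  exact fd_bounds σ h2 h3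

theorem fd_le (σ : Perm (Fin n)) (y : ℕ) : fd σ y ≤ n := by
  by_cases hc1 : pv σ.symm y < pd σ
  · rw [fd, if_pos hc1]; exact pv_le σ _
  · by_cases hc2 : pv σ.symm y = pd σ
    · rw [fd, if_neg hc1, if_pos hc2]; omega
    · have hp : pd σ < pv σ.symm y := by omega
      have hle : pv σ.symm y ≤ n := pv_le σ.symm y
      by_cases hc3 : pv σ.symm y < n ∧ mvd σ (pv σ.symm y) < pv σ (pv σ.symm y + 1)
      · rw [fd, if_neg hc1, if_neg hc2, if_pos hc3]; exact pv_le σ _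
      · rw [fd, if_neg hc1, if_neg hc2, if_neg hc3]
        exact (mvd_bounds σ hp hle).2


theorem succ_ne_mvd (σ : Perm (Fin n)) {i j : ℕ} (hj : j ≤ n) (hjp : pd σ < j)
    (hsucc : i < pd σ ∨ (pd σ < i ∧ i < n ∧ mvd σ i < pv σ (i + 1))) :
    pv σ (i + 1) ≠ mvd σ j := by
  intro e
  obtain ⟨k, hk1, hk2, e2⟩ := mvd_mem σ hjp
  have hpn := pd_le σ
  have hi1 : i + 1 ≤ n := by rcases hsucc with h | h <;> omega
  have hik : i + 1 = k := pv_inj σ hi1 (by omega) (by rw [e, ← e2])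
  rcases hsucc with h | h
  · omega
  · have h1 : mvd σ j ≤ mvd σ (i + 1) := mvd_anti σ (by omega) (by omega)
    have h2 : mvd σ (i + 1) ≤ mvd σ i := mvd_anti σ h.1 (by omega)
    omega

theorem else_lt (σ : Perm (Fin n)) {i : ℕ} (hip : pd σ < i) (hin : i < n)
    (h : ¬(i < n ∧ mvd σ i < pv σ (i + 1))) : pv σ (i + 1) < mvd σ i := by
  have := W_ne_mvd σ hip hin
  omega

theorem else_ne_else (σ : Perm (Fin n)) {i j : ℕ} (hij : i < j) (hj : j ≤ n)
    (hip : pd σ < i) (hjp : pd σ < j)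
    (hi_else : ¬(i < n ∧ mvd σ i < pv σ (i + 1))) :
    mvd σ i ≠ mvd σ j := by
  intro e
  have h1 : pv σ (i + 1) < mvd σ i := else_lt σ hip (by omega) hi_else
  have h2 : mvd σ j ≤ pv σ (i + 1) := mvd_le σ (by omega) (by omega)
  omega

theorem fd_inj (σ : Perm (Fin n)) {i j : ℕ} (hi : i ≤ n) (hj : j ≤ n)
    (e : fd σ (pv σ i) = fd σ (pv σ j)) : i = j := by
  have hpn := pd_le σ
  have shape : ∀ m, m ≤ n →
      (m < pd σ ∧ fd σ (pv σ m) = pv σ (m + 1)) ∨ (m = pd σ) ∨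
      (pd σ < m ∧ m < n ∧ mvd σ m < pv σ (m + 1) ∧ fd σ (pv σ m) = pv σ (m + 1)) ∨
      (pd σ < m ∧ ¬(m < n ∧ mvd σ m < pv σ (m + 1)) ∧ fd σ (pv σ m) = mvd σ m) := by
    intro m hm
    rcases lt_trichotomy m (pd σ) with hc | hc | hc
    · exact Or.inl ⟨hc, fd_lt σ hm hc⟩
    · exact Or.inr (Or.inl hc)
    · by_cases h2 : m < n ∧ mvd σ m < pv σ (m + 1)
      · exact Or.inr (Or.inr (Or.inl ⟨hc, h2.1, h2.2, fd_asc σ hm hc h2.1 h2.2⟩))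
      · exact Or.inr (Or.inr (Or.inr ⟨hc, h2, fd_else σ hm hc h2⟩))
  have hzero : ∀ m, m ≤ n → m ≠ pd σ → fd σ (pv σ m) ≠ 0 := by
    intro m hm hne hz
    have := (fd_bounds σ hm hne).1
    omega
  rcases shape i hi with ⟨hc1, e1⟩ | hc1 | ⟨hc1, hc1n, hc1m, e1⟩ | ⟨hc1, hc1e, e1⟩ <;>
    rcases shape j hj with ⟨hc2, e2⟩ | hc2 | ⟨hc2, hc2n, hc2m, e2⟩ | ⟨hc2, hc2e, e2⟩
  · rw [e1, e2] at e; have := pv_inj σ (by omega) (by omega) e; omega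
  · exfalso; subst hc2
    have : fd σ (pv σ (pd σ)) = 0 := by
      rw [W_pd σ (by omega)]; exact fd_p σ (by omega)
    exact hzero i hi (by omega) (by rw [e, this])
  · rw [e1, e2] at e; have := pv_inj σ (by omega) (by omega) e; omega
  · rw [e1, e2] at e; exact absurd e (succ_ne_mvd σ hj hc2 (Or.inl hc1))
  · exfalso; subst hc1
    have : fd σ (pv σ (pd σ)) = 0 := by
      rw [W_pd σ (by omega)]; exact fd_p σ (by omega)
    exact hzero j hj (by omega) (by rw [← e, this])
  · omega
  · exfalso; subst hc1
    have : fd σ (pv σ (pd σ)) = 0 := by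
      rw [W_pd σ (by omega)]; exact fd_p σ (by omega)
    exact hzero j hj (by omega) (by rw [← e, this])
  · exfalso; subst hc1
    have : fd σ (pv σ (pd σ)) = 0 := by
      rw [W_pd σ (by omega)]; exact fd_p σ (by omega)
    exact hzero j hj (by omega) (by rw [← e, this])
  · rw [e1, e2] at e; have := pv_inj σ (by omega) (by omega) e; omega
  · exfalso; subst hc2
    have : fd σ (pv σ (pd σ)) = 0 := by
      rw [W_pd σ (by omega)]; exact fd_p σ (by omega)
    exact hzero i hi (by omega) (by rw [e, this])
  · rw [e1, e2] at e; have := pv_inj σ (by omega) (by omega) e; omega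
  · rw [e1, e2] at e; exact absurd e (succ_ne_mvd σ hj hc2 (Or.inr ⟨hc1, hc1n, hc1m⟩))
  · rw [e1, e2] at e; exact absurd e.symm (succ_ne_mvd σ hi hc1 (Or.inl hc2))
  · exfalso; subst hc2
    have : fd σ (pv σ (pd σ)) = 0 := by
      rw [W_pd σ (by omega)]; exact fd_p σ (by omega)
    exact hzero i hi (by omega) (by rw [e, this])
  · rw [e1, e2] at e; exact absurd e.symm (succ_ne_mvd σ hi hc1 (Or.inr ⟨hc2, hc2n, hc2m⟩))
  · rcases lt_trichotomy i j with hc | hc | hc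
    · rw [e1, e2] at e; exact absurd e (else_ne_else σ hc hj hc1 hc2 hc1e)
    · exact hc
    · rw [e1, e2] at e; exact absurd e.symm (else_ne_else σ hc hi hc2 hc1 hc2e)

theorem fd_inj' (σ : Perm (Fin n)) {y y' : ℕ} (hy : y ≤ n) (hy' : y' ≤ n)
    (e : fd σ y = fd σ y') : y = y' := by
  have h1 := pv_pv_symm σ hy
  have h2 := pv_pv_symm σ hy'
  have := fd_inj σ (pv_le σ.symm y) (pv_le σ.symm y')
    (by rw [h1, h2]; exact e)
  rw [← h1, ← h2, this]


/-- the bijection `Φ : σ ↦ τ`, with `τ(y) = c'(y) - 1` (0-based). -/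
noncomputable def phi (σ : Perm (Fin n)) : Perm (Fin n) :=
  Equiv.ofBijective (fun z : Fin n => (⟨fd σ z - 1, by
    have h := (fd_bounds' σ (le_of_lt z.isLt) (Nat.ne_of_lt z.isLt)).2
    have h1 := (fd_bounds' σ (le_of_lt z.isLt) (Nat.ne_of_lt z.isLt)).1
    have := z.isLt
    omega⟩ : Fin n))
  (Finite.injective_iff_bijective.mp (by
    intro z₁ z₂ h
    have h1 := (fd_bounds' σ (le_of_lt z₁.isLt) (Nat.ne_of_lt z₁.isLt)).1
    have h2 := (fd_bounds' σ (le_of_lt z₂.isLt) (Nat.ne_of_lt z₂.isLt)).1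
    have hv : fd σ z₁ - 1 = fd σ z₂ - 1 := congrArg Fin.val h
    have he : fd σ (z₁ : ℕ) = fd σ (z₂ : ℕ) := by omega
    have := fd_inj' σ (le_of_lt z₁.isLt) (le_of_lt z₂.isLt) he
    exact Fin.ext this))

theorem pv_phi (σ : Perm (Fin n)) {i : ℕ} (h1 : 1 ≤ i) (h2 : i ≤ n) :
    pv (phi σ) i = fd σ (i - 1) := by
  rw [pv_of_le (phi σ) h1 h2]
  have hb := (fd_bounds' σ (show i - 1 ≤ n by omega) (by omega)).1
  simp only [phi, Equiv.ofBijective_apply]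
  omega


theorem bridge1 (σ : Perm (Fin n)) {i : ℕ} (h1 : 1 ≤ i) (h2 : i ≤ n) :
    (pv σ (i - 1) + 2 ≤ pv σ i) ↔ (pv σ (i - 1) + 2 ≤ fd σ (pv σ (i - 1))) := by
  have hpn := pd_le σ
  have hi : i - 1 ≤ n := by omega
  have hii : i = i - 1 + 1 := by omega
  rcases lt_trichotomy (i - 1) (pd σ) with hc | hc | hc
  · rw [fd_lt σ hi hc, ← hii]
  · rw [hc, W_pd σ (by omega)]
    have e0 : fd σ n = 0 := fd_p σ (by omega)
    have := pv_le σ i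
    rw [e0]
    omega
  · by_cases ha : mvd σ (i - 1) < pv σ i
    · rw [fd_asc σ hi hc (by omega) (by rw [← hii]; exact ha), ← hii]
    · have hd : pv σ i < mvd σ (i - 1) := by
        have := W_ne_mvd σ hc (show i - 1 < n by omega)
        rw [← hii] at this
        omega
      rw [fd_else σ hi hc (by rw [← hii]; omega)]
      have hm : mvd σ (i - 1) ≤ pv σ (i - 1) := mvd_le σ hc le_rfl
      omega

theorem bridge2 (σ : Perm (Fin n)) {i : ℕ} (h1 : 1 ≤ i) (h2 : i ≤ n) :
    (pv σ (i - 1) + 1 = pv σ i) ↔ (fd σ (pv σ (i - 1)) = pv σ (i - 1) + 1) := by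
  have hpn := pd_le σ
  have hi : i - 1 ≤ n := by omega
  have hii : i = i - 1 + 1 := by omega
  rcases lt_trichotomy (i - 1) (pd σ) with hc | hc | hc
  · rw [fd_lt σ hi hc, ← hii]; omega
  · rw [hc, W_pd σ (by omega)]
    have e0 : fd σ n = 0 := fd_p σ (by omega)
    have := pv_le σ i
    rw [e0]
    omega
  · by_cases ha : mvd σ (i - 1) < pv σ i
    · rw [fd_asc σ hi hc (by omega) (by rw [← hii]; exact ha), ← hii]; omega
    · have hd : pv σ i < mvd σ (i - 1) := by
        have := W_ne_mvd σ hc (show i - 1 < n by omega)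
        rw [← hii] at this
        omega
      rw [fd_else σ hi hc (by rw [← hii]; omega)]
      have hm : mvd σ (i - 1) ≤ pv σ (i - 1) := mvd_le σ hc le_rfl
      omega

theorem bridge3 (σ : Perm (Fin n)) {i : ℕ} (h1 : 1 ≤ i) (h2 : i ≤ n) :
    (pv σ i < pv σ (i - 1)) ↔ (fd σ (pv σ (i - 1)) ≤ pv σ (i - 1)) := by
  have hpn := pd_le σ
  have hi : i - 1 ≤ n := by omega
  have hii : i = i - 1 + 1 := by omega
  rcases lt_trichotomy (i - 1) (pd σ) with hc | hc | hc
  · rw [fd_lt σ hi hc, ← hii]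
    have hne : pv σ i ≠ pv σ (i - 1) := fun e => by
      have := pv_inj σ h2 hi e; omega
    omega
  · rw [hc, W_pd σ (by omega)]
    have e0 : fd σ n = 0 := fd_p σ (by omega)
    have h3 := pv_le σ i
    have hne : pv σ i ≠ n := by
      intro e
      have : pv σ i = pv σ (pd σ) := by rw [e, W_pd σ (by omega)]
      have := pv_inj σ h2 (by omega) this
      omega
    rw [e0]
    omega
  · by_cases ha : mvd σ (i - 1) < pv σ i
    · rw [fd_asc σ hi hc (by omega) (by rw [← hii]; exact ha), ← hii]
      have hne : pv σ i ≠ pv σ (i - 1) := fun e => by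
        have := pv_inj σ h2 hi e; omega
      omega
    · have hd : pv σ i < mvd σ (i - 1) := by
        have := W_ne_mvd σ hc (show i - 1 < n by omega)
        rw [← hii] at this
        omega
      rw [fd_else σ hi hc (by rw [← hii]; omega)]
      have hm : mvd σ (i - 1) ≤ pv σ (i - 1) := mvd_le σ hc le_rfl
      omega

/-- the extra point `y = W n` is always a (weak) drop for `fd`. -/
theorem fd_Wn (σ : Perm (Fin n)) (hn : 0 < n) : fd σ (pv σ n) ≤ pv σ n := by
  have hpn := pd_le σ
  rcases lt_or_eq_of_le hpn with hc | hc
  · rw [fd_last σ hc]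
    exact mvd_le σ hc le_rfl
  · have hWn : pv σ n = n := by have := W_pd σ hn; rw [hc] at this; exact this
    rw [hWn, fd_p σ hn]
    omega

theorem card_pos (σ : Perm (Fin n)) (hn : 0 < n) (Q : ℕ → Prop) [DecidablePred Q] :
    ((Finset.Icc 1 n).filter (fun i => Q (pv σ (i - 1)))).card
      = (((Finset.Icc 0 n).filter Q).erase (pv σ n)).card := by
  apply Finset.card_bij (fun i _ => pv σ (i - 1))
  · intro a ha
    rw [Finset.mem_filter, Finset.mem_Icc] at ha
    rw [Finset.mem_erase, Finset.mem_filter, Finset.mem_Icc]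
    refine ⟨?_, ⟨by omega, pv_le σ _⟩, ha.2⟩
    intro e
    have := pv_inj σ (show a - 1 ≤ n by omega) le_rfl e
    omega
  · intro a ha b hb e
    rw [Finset.mem_filter, Finset.mem_Icc] at ha hb
    have := pv_inj σ (show a - 1 ≤ n by omega) (show b - 1 ≤ n by omega) e
    omega
  · intro y hy
    rw [Finset.mem_erase, Finset.mem_filter, Finset.mem_Icc] at hy
    obtain ⟨hne, ⟨_, hyn⟩, hQ⟩ := hy
    have h1 : pv σ (pv σ.symm y) = y := pv_pv_symm σ hyn
    have h2 : pv σ.symm y ≤ n := pv_le σ.symm y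
    have h3 : pv σ.symm y ≠ n := by
      intro e
      rw [e] at h1
      exact hne h1.symm
    refine ⟨pv σ.symm y + 1, ?_, ?_⟩
    · rw [Finset.mem_filter, Finset.mem_Icc]
      constructor
      · omega
      · rw [show pv σ.symm y + 1 - 1 = pv σ.symm y from by omega, h1]
        exact hQ
    · rw [show pv σ.symm y + 1 - 1 = pv σ.symm y from by omega, h1]

theorem card_pos' (hn : 0 < n) (Q : ℕ → Prop) [DecidablePred Q] :
    ((Finset.Icc 1 n).filter (fun i => Q (i - 1))).card
      = (((Finset.Icc 0 n).filter Q).erase n).card := by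
  apply Finset.card_bij (fun i _ => i - 1)
  · intro a ha
    rw [Finset.mem_filter, Finset.mem_Icc] at ha
    rw [Finset.mem_erase, Finset.mem_filter, Finset.mem_Icc]
    exact ⟨by omega, ⟨by omega, by omega⟩, ha.2⟩
  · intro a ha b hb e
    rw [Finset.mem_filter, Finset.mem_Icc] at ha hb
    omega
  · intro y hy
    rw [Finset.mem_erase, Finset.mem_filter, Finset.mem_Icc] at hy
    refine ⟨y + 1, ?_, by omega⟩
    rw [Finset.mem_filter, Finset.mem_Icc]
    refine ⟨by omega, ?_⟩
    rw [show y + 1 - 1 = y from by omega]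
    exact hy.2.2


theorem des_reindex (σ : Perm (Fin n)) (hn : 0 < n) :
    des σ = ((Finset.Icc 1 n).filter (fun i => pv σ i < pv σ (i - 1))).card := by
  rw [des]
  apply Finset.card_bij (fun i _ => i + 1)
  · intro a ha
    rw [Finset.mem_filter, Finset.mem_Icc] at ha
    rw [Finset.mem_filter, Finset.mem_Icc]
    refine ⟨by omega, ?_⟩
    rw [show a + 1 - 1 = a from by omega]
    exact ha.2
  · intro a _ b _ e
    omega
  · intro j hj
    rw [Finset.mem_filter, Finset.mem_Icc] at hj
    have hj2 : 2 ≤ j := by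
      by_contra h
      have h1 : j = 1 := by omega
      rw [h1] at hj
      have := hj.2
      rw [show (1:ℕ) - 1 = 0 from rfl, pv_zero σ] at this
      omega
    refine ⟨j - 1, ?_, by omega⟩
    rw [Finset.mem_filter, Finset.mem_Icc]
    refine ⟨by omega, ?_⟩
    rw [show j - 1 + 1 = j from by omega]
    exact hj.2

theorem stat_jump (σ : Perm (Fin n)) (hn : 0 < n) : jump σ = exc (phi σ) := by
  classical
  have h1 : jump σ = ((Finset.Icc 1 n).filter
      (fun i => pv σ (i - 1) + 2 ≤ fd σ (pv σ (i - 1)))).card := by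
    rw [jump]
    congr 1
    apply Finset.filter_congr
    intro i hi
    rw [Finset.mem_Icc] at hi
    exact bridge1 σ hi.1 hi.2
  have h2 : exc (phi σ) = ((Finset.Icc 1 n).filter
      (fun i => (i - 1) + 2 ≤ fd σ (i - 1))).card := by
    rw [exc]
    congr 1
    apply Finset.filter_congr
    intro i hi
    rw [Finset.mem_Icc] at hi
    rw [pv_phi σ hi.1 hi.2]
    omega
  rw [h1, h2, card_pos σ hn (fun z => z + 2 ≤ fd σ z),
    card_pos' hn (fun z => z + 2 ≤ fd σ z)]
  congr 1
  rw [Finset.erase_eq_of_notMem, Finset.erase_eq_of_notMem]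
  · intro hmem
    rw [Finset.mem_filter] at hmem
    have := hmem.2
    rw [fd_p σ hn] at this
    omega
  · intro hmem
    rw [Finset.mem_filter] at hmem
    have := fd_Wn σ hn
    omega

theorem stat_lsuc (σ : Perm (Fin n)) (hn : 0 < n) : lsuc σ = fixpt (phi σ) := by
  classical
  have h1 : lsuc σ = ((Finset.Icc 1 n).filter
      (fun i => fd σ (pv σ (i - 1)) = pv σ (i - 1) + 1)).card := by
    rw [lsuc]
    congr 1
    apply Finset.filter_congr
    intro i hi
    rw [Finset.mem_Icc] at hi
    exact bridge2 σ hi.1 hi.2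
  have h2 : fixpt (phi σ) = ((Finset.Icc 1 n).filter
      (fun i => fd σ (i - 1) = (i - 1) + 1)).card := by
    rw [fixpt]
    congr 1
    apply Finset.filter_congr
    intro i hi
    rw [Finset.mem_Icc] at hi
    rw [pv_phi σ hi.1 hi.2]
    omega
  rw [h1, h2, card_pos σ hn (fun z => fd σ z = z + 1),
    card_pos' hn (fun z => fd σ z = z + 1)]
  congr 1
  rw [Finset.erase_eq_of_notMem, Finset.erase_eq_of_notMem]
  · intro hmem
    rw [Finset.mem_filter] at hmem
    have := hmem.2
    rw [fd_p σ hn] at this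
    omega
  · intro hmem
    rw [Finset.mem_filter] at hmem
    have := fd_Wn σ hn
    omega

theorem stat_des (σ : Perm (Fin n)) (hn : 0 < n) : des σ = dropStat (phi σ) := by
  classical
  have h1 : des σ = ((Finset.Icc 1 n).filter
      (fun i => fd σ (pv σ (i - 1)) ≤ pv σ (i - 1))).card := by
    rw [des_reindex σ hn]
    congr 1
    apply Finset.filter_congr
    intro i hi
    rw [Finset.mem_Icc] at hi
    exact bridge3 σ hi.1 hi.2
  have h2 : dropStat (phi σ) = ((Finset.Icc 1 n).filter
      (fun i => fd σ (i - 1) ≤ i - 1)).card := by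
    rw [dropStat]
    congr 1
    apply Finset.filter_congr
    intro i hi
    rw [Finset.mem_Icc] at hi
    rw [pv_phi σ hi.1 hi.2]
    have := (fd_bounds' σ (show i - 1 ≤ n by omega) (by omega)).1
    omega
  rw [h1, h2, card_pos σ hn (fun z => fd σ z ≤ z),
    card_pos' hn (fun z => fd σ z ≤ z)]
  rw [Finset.card_erase_of_mem, Finset.card_erase_of_mem]
  · rw [Finset.mem_filter, Finset.mem_Icc]
    refine ⟨⟨by omega, le_rfl⟩, by rw [fd_p σ hn]; omega⟩
  · rw [Finset.mem_filter, Finset.mem_Icc]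
    exact ⟨⟨by omega, pv_le σ n⟩, fd_Wn σ hn⟩


/-- `j` is a "leader": a strict left-to-right minimum of the word after position `p`. -/
def ld (σ : Perm (Fin n)) (j : ℕ) : Prop :=
  pd σ < j ∧ j ≤ n ∧ ∀ k, pd σ < k → k < j → pv σ j < pv σ k

theorem blk_le (σ : Perm (Fin n)) {s : ℕ} (hs : ld σ s) :
    ∀ j, s ≤ j → j ≤ n → (∀ k, s < k → k ≤ j → ¬ ld σ k) → pv σ s ≤ pv σ j := by
  intro j
  induction j using Nat.strong_induction_on with
  | _ j ih =>
    intro h1 h2 h3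
    rcases eq_or_lt_of_le h1 with rfl | hsj
    · exact le_rfl
    have hnld : ¬ ld σ j := h3 j hsj le_rfl
    rw [ld] at hnld
    push_neg at hnld
    obtain ⟨k, hk1, hk2, hk3⟩ := hnld (by have := hs.1; omega) h2
    rcases lt_trichotomy k s with hc | hc | hc
    · have := hs.2.2 k hk1 hc
      omega
    · subst hc
      exact hk3
    · have := ih k hk2 (by omega) (by omega) (fun k' hka hkb => h3 k' hka (by omega))
      omega

theorem blk_mv (σ : Perm (Fin n)) {s j : ℕ} (hs : ld σ s) (h1 : s ≤ j) (h2 : j ≤ n)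
    (h3 : ∀ k, s < k → k ≤ j → ¬ ld σ k) : mvd σ j = pv σ s := by
  have hpj : pd σ < j := lt_of_lt_of_le hs.1 h1
  have hle : mvd σ j ≤ pv σ s := mvd_le σ hs.1 h1
  obtain ⟨k₀, hk₀1, hk₀2, e⟩ := mvd_mem σ hpj
  rcases lt_trichotomy k₀ s with hc | hc | hc
  · exfalso
    have := hs.2.2 k₀ hk₀1 hc
    omega
  · subst hc
    omega
  · have hge : pv σ s ≤ pv σ k₀ := blk_le σ hs k₀ (by omega) (by omega)
      (fun k hka hkb => h3 k hka (by omega))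
    omega

theorem noext (σ : Perm (Fin n)) {j : ℕ} (hpj : pd σ < j) (hjn : j < n)
    (hasc : mvd σ j < pv σ (j + 1)) : ¬ ld σ (j + 1) := by
  intro hld
  obtain ⟨k₀, hk₀1, hk₀2, e⟩ := mvd_mem σ hpj
  have := hld.2.2 k₀ hk₀1 (by omega)
  omega

theorem reach (σ : Perm (Fin n)) {s : ℕ} (hs : ld σ s) :
    ∀ t j, n - j = t → s ≤ j → j ≤ n → (∀ k, s < k → k ≤ j → ¬ ld σ k) →
      ∃ m, (fd σ)^[m] (pv σ j) = pv σ s := by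
  intro t
  induction t using Nat.strong_induction_on with
  | _ t ih =>
    intro j ht h1 h2 h3
    have hpj : pd σ < j := lt_of_lt_of_le hs.1 h1
    by_cases hasc : j < n ∧ mvd σ j < pv σ (j + 1)
    · have hstep : fd σ (pv σ j) = pv σ (j + 1) := fd_asc σ h2 hpj hasc.1 hasc.2
      have hnold : ∀ k, s < k → k ≤ j + 1 → ¬ ld σ k := by
        intro k hka hkb
        rcases eq_or_lt_of_le hkb with rfl | h
        · exact noext σ hpj hasc.1 hasc.2
        · exact h3 k hka (by omega)
      obtain ⟨m, hm⟩ := ih (n - (j + 1)) (by omega) (j + 1) rfl (by omega)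
        (by omega) hnold
      exact ⟨m + 1, by rw [Function.iterate_succ_apply, hstep, hm]⟩
    · have hstep : fd σ (pv σ j) = mvd σ j := fd_else σ h2 hpj hasc
      refine ⟨1, ?_⟩
      rw [Function.iterate_one, hstep]
      exact blk_mv σ hs h1 h2 h3

theorem leader_P (σ : Perm (Fin n)) {s : ℕ} (hs : ld σ s) :
    ∀ m, pv σ s ≤ (fd σ)^[m] (pv σ s) := by
  have inv : ∀ m, ∃ j, s ≤ j ∧ j ≤ n ∧ (∀ k, s < k → k ≤ j → ¬ ld σ k) ∧
      (fd σ)^[m] (pv σ s) = pv σ j := by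
    intro m
    induction m with
    | zero => exact ⟨s, le_rfl, hs.2.1, fun k hka hkb => by omega, rfl⟩
    | succ m ihm =>
      obtain ⟨j, h1, h2, h3, h4⟩ := ihm
      have hpj : pd σ < j := lt_of_lt_of_le hs.1 h1
      by_cases hasc : j < n ∧ mvd σ j < pv σ (j + 1)
      · refine ⟨j + 1, by omega, by omega, ?_, ?_⟩
        · intro k hka hkb
          rcases eq_or_lt_of_le hkb with rfl | h
          · exact noext σ hpj hasc.1 hasc.2
          · exact h3 k hka (by omega)
        · rw [Function.iterate_succ_apply', h4, fd_asc σ h2 hpj hasc.1 hasc.2]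
      · refine ⟨s, le_rfl, hs.2.1, fun k hka hkb => by omega, ?_⟩
        rw [Function.iterate_succ_apply', h4, fd_else σ h2 hpj hasc]
        exact blk_mv σ hs h1 h2 h3
  intro m
  obtain ⟨j, h1, h2, h3, h4⟩ := inv m
  rw [h4]
  exact blk_le σ hs j h1 h2 h3

theorem leader_max (σ : Perm (Fin n)) {i j : ℕ} (hld : ld σ (i + 1))
    (h1 : i + 1 ≤ j) (h2 : j ≤ n) (hP : ∀ m, pv σ j ≤ (fd σ)^[m] (pv σ j)) :
    pv σ j ≤ pv σ (i + 1) := by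
  classical
  rcases eq_or_lt_of_le h1 with rfl | hlt
  · exact le_rfl
  have hex : ∃ s, ld σ s ∧ i + 1 ≤ s ∧ s ≤ j ∧ ∀ k, s < k → k ≤ j → ¬ ld σ k :=
    ⟨Nat.findGreatest (fun k => ld σ k) j,
      Nat.findGreatest_spec (le_of_lt hlt) hld,
      Nat.le_findGreatest (le_of_lt hlt) hld,
      Nat.findGreatest_le j,
      fun k hka hkb => Nat.findGreatest_is_greatest hka hkb⟩
  obtain ⟨s, hlds, hs1, hs2, hnold⟩ := hex
  rcases eq_or_lt_of_le hs2 with rfl | hsj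
  · have := hlds.2.2 (i + 1) hld.1 hlt
    omega
  · exfalso
    obtain ⟨m, hm⟩ := reach σ hlds (n - j) j rfl (by omega) h2 hnold
    have h5 := hP m
    rw [hm] at h5
    have h6 : pv σ s ≤ pv σ j := blk_le σ hlds j (by omega) h2 hnold
    have : s = j := pv_inj σ (by omega) h2 (by omega)
    omega


theorem step_or (σ : Perm (Fin n)) {i : ℕ} (hi : i + 1 ≤ n) :
    (∃ k, k ≤ i ∧ pv σ k = fd σ (pv σ i)) ∨ fd σ (pv σ i) = pv σ (i + 1) := by
  have hpn := pd_le σ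
  rcases lt_trichotomy i (pd σ) with hc | hc | hc
  · exact Or.inr (fd_lt σ (by omega) hc)
  · refine Or.inl ⟨0, Nat.zero_le _, ?_⟩
    rw [pv_zero, hc, W_pd σ (by omega), fd_p σ (by omega)]
  · by_cases hasc : i < n ∧ mvd σ i < pv σ (i + 1)
    · exact Or.inr (fd_asc σ (by omega) hc hasc.1 hasc.2)
    · obtain ⟨k, hk1, hk2, e⟩ := mvd_mem σ hc
      exact Or.inl ⟨k, hk2, by rw [e, fd_else σ (by omega) hc hasc]⟩

theorem step_leader (σ : Perm (Fin n)) {i : ℕ} (hi : i + 1 ≤ n)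
    (hseen : ∃ k, k ≤ i ∧ pv σ k = fd σ (pv σ i)) :
    ld σ (i + 1) ∧ (∀ m, pv σ (i + 1) ≤ (fd σ)^[m] (pv σ (i + 1))) ∧
      (∀ y, y ≤ n → (∀ k, k ≤ i → pv σ k ≠ y) → (∀ m, y ≤ (fd σ)^[m] y) →
        y ≤ pv σ (i + 1)) := by
  have hpn := pd_le σ
  have hip : pd σ ≤ i := by
    by_contra h
    push_neg at h
    obtain ⟨k, hk1, hk2⟩ := hseen
    rw [fd_lt σ (by omega) h] at hk2
    have := pv_inj σ (by omega) (by omega) hk2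
    omega
  have hld : ld σ (i + 1) := by
    rcases eq_or_lt_of_le hip with rfl | hlt
    · exact ⟨by omega, hi, fun k h1 h2 => by omega⟩
    · have hdesc : pv σ (i + 1) < mvd σ i := by
        by_cases hasc : i < n ∧ mvd σ i < pv σ (i + 1)
        · exfalso
          obtain ⟨k, hk1, hk2⟩ := hseen
          rw [fd_asc σ (by omega) hlt hasc.1 hasc.2] at hk2
          have := pv_inj σ (by omega) (by omega) hk2
          omega
        · have := W_ne_mvd σ hlt (by omega)
          omega
      refine ⟨by omega, hi, fun k h1 h2 => ?_⟩
      exact lt_of_lt_of_le hdesc (mvd_le σ h1 (by omega))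
  refine ⟨hld, leader_P σ hld, ?_⟩
  intro y hy hunseen hP
  have h1 : pv σ (pv σ.symm y) = y := pv_pv_symm σ hy
  have h2 : pv σ.symm y ≤ n := pv_le σ.symm y
  have h3 : i + 1 ≤ pv σ.symm y := by
    by_contra h
    push_neg at h
    exact hunseen (pv σ.symm y) (by omega) h1
  have := leader_max σ hld h3 h2 (by rw [h1]; exact hP)
  rw [h1] at this
  exact this

theorem iter_eq (σ ρ : Perm (Fin n)) (hf : ∀ y, y ≤ n → fd σ y = fd ρ y) :
    ∀ m y, y ≤ n → (fd σ)^[m] y = (fd ρ)^[m] y := by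
  intro m
  induction m with
  | zero => intro y _; rfl
  | succ m ihm =>
    intro y hy
    rw [Function.iterate_succ_apply, Function.iterate_succ_apply, hf y hy]
    exact ihm (fd ρ y) (fd_le ρ y)

theorem phi_injective : Function.Injective (phi : Perm (Fin n) → Perm (Fin n)) := by
  intro σ ρ e
  rcases Nat.eq_zero_or_pos n with rfl | hn
  · exact Subsingleton.elim σ ρ
  have hf : ∀ y, y ≤ n → fd σ y = fd ρ y := by
    intro y hy
    rcases eq_or_lt_of_le hy with rfl | hlt
    · rw [fd_p σ hn, fd_p ρ hn]
    · have e1 : pv (phi σ) (y + 1) = fd σ y := by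
        rw [pv_phi σ (by omega) (by omega)]
        norm_num
      have e2 : pv (phi ρ) (y + 1) = fd ρ y := by
        rw [pv_phi ρ (by omega) (by omega)]
        norm_num
      rw [← e1, ← e2, e]
  have hW : ∀ i, i ≤ n → pv σ i = pv ρ i := by
    intro i
    induction i using Nat.strong_induction_on with
    | _ i ih =>
      intro hi
      match i with
      | 0 => rw [pv_zero, pv_zero]
      | (i + 1) =>
        have hIH : ∀ k, k ≤ i → pv σ k = pv ρ k := fun k hk => ih k (by omega) (by omega)
        have hWi : pv σ i = pv ρ i := hIH i le_rfl
        by_cases hseen : ∃ k, k ≤ i ∧ pv σ k = fd σ (pv σ i)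
        · have hseenρ : ∃ k, k ≤ i ∧ pv ρ k = fd ρ (pv ρ i) := by
            obtain ⟨k, hk1, hk2⟩ := hseen
            refine ⟨k, hk1, ?_⟩
            rw [← hIH k hk1, ← hWi, ← hf (pv σ i) (pv_le σ i)]
            exact hk2
          obtain ⟨hld1, hP1, hmax1⟩ := step_leader σ hi hseen
          obtain ⟨hld2, hP2, hmax2⟩ := step_leader ρ hi hseenρ
          apply le_antisymm
          · apply hmax2 (pv σ (i + 1)) (pv_le σ _)
            · intro k hk
              rw [← hIH k hk]
              intro e'
              have := pv_inj σ (by omega) hi e'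
              omega
            · intro m
              rw [← iter_eq σ ρ hf m _ (pv_le σ _)]
              exact hP1 m
          · apply hmax1 (pv ρ (i + 1)) (pv_le ρ _)
            · intro k hk
              rw [hIH k hk]
              intro e'
              have := pv_inj ρ (by omega) hi e'
              omega
            · intro m
              rw [iter_eq σ ρ hf m _ (pv_le ρ _)]
              exact hP2 m
        · have hseenρ : ¬ ∃ k, k ≤ i ∧ pv ρ k = fd ρ (pv ρ i) := by
            intro ⟨k, hk1, hk2⟩
            apply hseen
            refine ⟨k, hk1, ?_⟩
            rw [hIH k hk1, hk2, hWi, hf (pv ρ i) (pv_le ρ i)]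
          have e1 : fd σ (pv σ i) = pv σ (i + 1) := by
            rcases step_or σ hi with h | h
            · exact absurd h hseen
            · exact h
          have e2 : fd ρ (pv ρ i) = pv ρ (i + 1) := by
            rcases step_or ρ hi with h | h
            · exact absurd h hseenρ
            · exact h
          rw [← e1, ← e2, hWi, hf (pv ρ i) (pv_le ρ i)]
  apply Equiv.ext
  intro z
  have hz := z.isLt
  have h := hW ((z : ℕ) + 1) (by omega)
  rw [pv_of_le σ (by omega) (by omega), pv_of_le ρ (by omega) (by omega)] at h
  have hz1 : (⟨(z : ℕ) + 1 - 1, by omega⟩ : Fin n) = z := by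
    apply Fin.ext
    simp
  rw [hz1] at h
  exact Fin.ext (by omega)

end JDL

theorem jump_des_lsuc_equidistributed_exc_drop_fix (n j d l : ℕ) (hn : 1 ≤ n) :
    ((Finset.univ : Finset (Equiv.Perm (Fin n))).filter
        (fun σ => jump σ = j ∧ des σ = d ∧ lsuc σ = l)).card =
    ((Finset.univ : Finset (Equiv.Perm (Fin n))).filter
        (fun τ => exc τ = j ∧ dropStat τ = d ∧ fixpt τ = l)).card := by
  classical
  have hsurj : Function.Surjective (JDL.phi : Equiv.Perm (Fin n) → Equiv.Perm (Fin n)) :=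
    Finite.injective_iff_surjective.mp JDL.phi_injective
  apply Finset.card_bij (fun σ _ => JDL.phi σ)
  · intro σ hσ
    rw [Finset.mem_filter] at hσ ⊢
    obtain ⟨-, h1, h2, h3⟩ := hσ
    refine ⟨Finset.mem_univ _, ?_, ?_, ?_⟩
    · rw [← JDL.stat_jump σ hn]; exact h1
    · rw [← JDL.stat_des σ hn]; exact h2
    · rw [← JDL.stat_lsuc σ hn]; exact h3
  · intro a _ b _ e
    exact JDL.phi_injective e
  · intro τ hτ
    obtain ⟨σ, rfl⟩ := hsurj τ
    rw [Finset.mem_filter] at hτ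
    refine ⟨σ, Finset.mem_filter.mpr ⟨Finset.mem_univ _, ?_, ?_, ?_⟩, rfl⟩
    · rw [JDL.stat_jump σ hn]; exact hτ.2.1
    · rw [JDL.stat_des σ hn]; exact hτ.2.2.1
    · rw [JDL.stat_lsuc σ hn]; exact hτ.2.2.2
end

section
/- For every n ≥ 1 and every subset I of {1,…,n-1}, the number of permutations of {1,…,n} whose set of successions is exactly I equals the number of permutations of {1,…,n} whose set of fixed points intersected with {1,…,n-1} is exactly I. Here the succession set of σ is M(σ) = {i : 1 ≤ i ≤ n-1, σ(i)+1 = σ(i+1)}, and G(σ) = {i : 1 ≤ i ≤ n-1, σ(i) = i}. -/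
/-!
For every `J`, exactly `(n - |J|)!` permutations satisfy `J ⊆ G(σ)`: those fixing the points
`j - 1`, `j ∈ J`. Exactly as many satisfy `J ⊆ M(σ)`: cut the positions into blocks, a position
`j ∈ J` continuing the block of `j - 1`; such a permutation maps every block increasingly onto an
interval of values, so it is determined by the relative order of its values at the `n - |J|`
block starts, and every order occurs. The numbers of `σ` with `F(σ) = I` are recovered from the
numbers with `J ⊆ F(σ)` by downward induction on `I` (Möbius inversion on subsets), hence agree
for `F = M` and `F = G`.
-/

open Finset

/-- The set of (interior) successions: `M(σ) = {1 ≤ i ≤ n-1 : σ(i)+1 = σ(i+1)}`. -/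
def Mset {n : ℕ} (σ : Equiv.Perm (Fin n)) : Finset ℕ :=
  (Finset.Icc 1 (n - 1)).filter (fun i => pv σ i + 1 = pv σ (i + 1))

/-- The set of fixed points in `[n-1]`: `G(σ) = {1 ≤ i ≤ n-1 : σ(i) = i}`. -/
def Gset {n : ℕ} (σ : Equiv.Perm (Fin n)) : Finset ℕ :=
  (Finset.Icc 1 (n - 1)).filter (fun i => pv σ i = i)

section SupersetInversion

variable {α β : Type*} [Fintype α] [DecidableEq β]

lemma card_filter_subset_eq_add_sum {U : Finset β} {F : α → Finset β} (hF : ∀ x, F x ⊆ U)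
    (J : Finset β) :
    #{x | J ⊆ F x} = #{x | F x = J} + ∑ K ∈ U.powerset with J ⊂ K, #{x | F x = K} := by
  have hsplit : #{x | J ⊆ F x} = #{x | F x = J} + #{x | J ⊂ F x} := by
    classical
    rw [← card_union_of_disjoint]
    · congr 1
      ext x
      simp only [mem_filter, mem_univ, true_and, mem_union]
      constructor
      · intro h
        exact (eq_or_ne (F x) J).imp id fun hne =>
          Finset.ssubset_iff_subset_ne.mpr ⟨h, Ne.symm hne⟩
      · rintro (h | h)
        · exact h.ge
        · exact h.subset
    · exact disjoint_filter.mpr fun x _ hJ hss => hss.ne hJ.symm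
  have hfiber : #{x | J ⊂ F x} = ∑ K ∈ U.powerset with J ⊂ K, #{x | F x = K} := by
    rw [card_eq_sum_card_fiberwise (f := F) (t := U.powerset.filter (J ⊂ ·))
      fun x hx => by simpa using ⟨hF x, (mem_filter.mp hx).2⟩]
    refine sum_congr rfl fun K hK => ?_
    rw [filter_filter]
    exact congrArg card <| filter_congr fun x _ =>
      ⟨fun h => h.2, fun h => ⟨h ▸ (mem_filter.mp hK).2, h⟩⟩
  rw [hsplit, hfiber]

theorem card_filter_eq_eq_of_card_filter_subset_eq {U : Finset β} {F G : α → Finset β}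
    (hF : ∀ x, F x ⊆ U) (hG : ∀ x, G x ⊆ U)
    (h : ∀ J ⊆ U, #{x | J ⊆ F x} = #{x | J ⊆ G x}) {J : Finset β} (hJ : J ⊆ U) :
    #{x | F x = J} = #{x | G x = J} := by
  induction hk : #U - #J using Nat.strong_induction_on generalizing J with
  | _ k ih =>
  have hsum : ∑ K ∈ U.powerset with J ⊂ K, #{x | F x = K}
      = ∑ K ∈ U.powerset with J ⊂ K, #{x | G x = K} := by
    refine sum_congr rfl fun K hK => ?_
    obtain ⟨hKU, hJK⟩ := mem_filter.mp hK
    have hKU := mem_powerset.mp hKU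
    have := card_lt_card hJK
    have := card_le_card hKU
    exact ih _ (by omega) hKU rfl
  have := h J hJ
  rw [card_filter_subset_eq_add_sum hF, card_filter_subset_eq_add_sum hG, hsum] at this
  omega

end SupersetInversion

section Orders

lemma lt_iff_lt_of_injective_of_lt_imp_lt {ι α β : Type*} [LinearOrder α] [Preorder β]
    {f : ι → α} {g : ι → β} (hf : Function.Injective f)
    (h : ∀ s t, f s < f t → g s < g t)
    {s t : ι} : g s < g t ↔ f s < f t := by
  refine ⟨fun hg => ?_, h s t⟩
  rcases lt_trichotomy (f s) (f t) with hlt | heq | hgt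
  · exact hlt
  · rw [hf heq] at hg
    exact absurd hg (lt_irrefl _)
  · exact absurd (h t s hgt) (lt_asymm hg)

lemma card_filter_apply_lt_apply {ι : Type*} [Fintype ι] {m : ℕ} (τ : ι ≃ Fin m) (s : ι) :
    #{t | τ t < τ s} = τ s := by
  rw [card_equiv τ (t := Iio (τ s)) (by simp), Fin.card_Iio]

end Orders

section Blocks

variable {n : ℕ} {I : Finset ℕ}

def natApply (σ : Equiv.Perm (Fin n)) (p : ℕ) : ℕ :=
  if h : p < n then σ ⟨p, h⟩ else n

lemma natApply_of_lt (σ : Equiv.Perm (Fin n)) {p : ℕ} (hp : p < n) :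
    natApply σ p = σ ⟨p, hp⟩ :=
  dif_pos hp

lemma natApply_val (σ : Equiv.Perm (Fin n)) (a : Fin n) : natApply σ a = σ a :=
  natApply_of_lt σ a.isLt

lemma natApply_lt (σ : Equiv.Perm (Fin n)) {p : ℕ} (hp : p < n) : natApply σ p < n := by
  rw [natApply_of_lt σ hp]
  exact (σ _).isLt

lemma injOn_natApply (σ : Equiv.Perm (Fin n)) : Set.InjOn (natApply σ) (Set.Iio n) := by
  intro p hp q hq h
  rw [natApply_of_lt σ hp, natApply_of_lt σ hq] at h
  exact Fin.mk.inj_iff.mp (σ.injective (Fin.ext h))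

lemma card_filter_natApply_lt (σ : Equiv.Perm (Fin n)) {c : ℕ} (hc : c ≤ n) :
    #{p ∈ range n | natApply σ p < c} = c := by
  have himage : image (natApply σ) {p ∈ range n | natApply σ p < c} = range c := by
    ext v
    simp only [mem_image, mem_filter, mem_range]
    constructor
    · rintro ⟨p, ⟨-, hp⟩, rfl⟩
      exact hp
    · intro hv
      refine ⟨σ.symm ⟨v, by omega⟩, ⟨(σ.symm _).isLt, ?_⟩, ?_⟩ <;>
        simp [natApply_val, hv]
  rw [← card_image_of_injOn (f := natApply σ), himage, card_range]
  refine (injOn_natApply σ).mono fun p hp => ?_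
  simp only [coe_filter, mem_range, Set.mem_ofPred_eq] at hp
  exact hp.1

/-- Positions in `I` continue the block of their predecessor; `blockStart I p` is the first
position of the block of `p`. -/
def blockStart (I : Finset ℕ) : ℕ → ℕ
  | 0 => 0
  | j + 1 => if j + 1 ∈ I then blockStart I j else j + 1

lemma blockStart_succ_of_mem {j : ℕ} (h : j + 1 ∈ I) : blockStart I (j + 1) = blockStart I j :=
  if_pos h

lemma blockStart_of_notMem {p : ℕ} (h : p ∉ I) : blockStart I p = p := by
  cases p with
  | zero => rfl
  | succ j => exact if_neg h

lemma blockStart_le (I : Finset ℕ) : ∀ p, blockStart I p ≤ p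
  | 0 => le_rfl
  | j + 1 => by
    by_cases h : j + 1 ∈ I
    · rw [blockStart_succ_of_mem h]
      exact (blockStart_le I j).trans j.le_succ
    · rw [blockStart_of_notMem h]

lemma blockStart_notMem (h0 : 0 ∉ I) : ∀ p, blockStart I p ∉ I
  | 0 => h0
  | j + 1 => by
    by_cases h : j + 1 ∈ I
    · rw [blockStart_succ_of_mem h]
      exact blockStart_notMem h0 j
    · rwa [blockStart_of_notMem h]

lemma blockStart_eq_of_le_of_le : ∀ {p q : ℕ}, blockStart I p ≤ q → q ≤ p →
    blockStart I q = blockStart I p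
  | 0, q, _, hq => by rw [Nat.le_zero.mp hq]
  | j + 1, q, hpq, hq => by
    rcases hq.eq_or_lt with rfl | hq
    · rfl
    by_cases h : j + 1 ∈ I
    · rw [blockStart_succ_of_mem h] at hpq ⊢
      exact blockStart_eq_of_le_of_le hpq (Nat.le_of_lt_succ hq)
    · rw [blockStart_of_notMem h] at hpq
      omega

def blockStarts (n : ℕ) (I : Finset ℕ) : Finset ℕ := range n \ I

def blockLength (n : ℕ) (I : Finset ℕ) (s : ℕ) : ℕ := #{p ∈ range n | blockStart I p = s}

lemma blockStart_mem_blockStarts (h0 : 0 ∉ I) {p : ℕ} (hp : p < n) :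
    blockStart I p ∈ blockStarts n I :=
  mem_sdiff.mpr ⟨mem_range.mpr ((blockStart_le I p).trans_lt hp), blockStart_notMem h0 p⟩

lemma card_blockStarts (hI : I ⊆ range n) : #(blockStarts n I) = n - #I := by
  rw [blockStarts, card_sdiff_of_subset hI, card_range]

lemma blockLength_pos {s : ℕ} (hs : s ∈ blockStarts n I) : 0 < blockLength n I s := by
  obtain ⟨hsn, hsI⟩ := mem_sdiff.mp hs
  exact card_pos.mpr ⟨s, mem_filter.mpr ⟨hsn, blockStart_of_notMem hsI⟩⟩

lemma sub_blockStart_lt_blockLength {p : ℕ} (hp : p < n) :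
    p - blockStart I p < blockLength n I (blockStart I p) := by
  have hsub : Icc (blockStart I p) p ⊆ {q ∈ range n | blockStart I q = blockStart I p} :=
    fun q hq => by
      obtain ⟨hq1, hq2⟩ := mem_Icc.mp hq
      exact mem_filter.mpr ⟨mem_range.mpr (hq2.trans_lt hp), blockStart_eq_of_le_of_le hq1 hq2⟩
  have := card_le_card hsub
  rw [Nat.card_Icc] at this
  have := blockStart_le I p
  unfold blockLength
  omega

lemma sum_blockLength (h0 : 0 ∉ I) : ∑ s ∈ blockStarts n I, blockLength n I s = n := by
  conv_rhs => rw [← card_range n, card_eq_sum_card_fiberwise fun p hp =>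
    blockStart_mem_blockStarts h0 (mem_range.mp hp)]
  rfl

def HasSuccessionsOn (I : Finset ℕ) (σ : Equiv.Perm (Fin n)) : Prop :=
  ∀ j, j + 1 ∈ I → natApply σ (j + 1) = natApply σ j + 1

lemma HasSuccessionsOn.natApply_blockStart_add {σ : Equiv.Perm (Fin n)}
    (hσ : HasSuccessionsOn I σ) :
    ∀ p, natApply σ (blockStart I p) + (p - blockStart I p) = natApply σ p
  | 0 => rfl
  | j + 1 => by
    by_cases h : j + 1 ∈ I
    · rw [blockStart_succ_of_mem h, hσ j h, ← hσ.natApply_blockStart_add j]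
      have := blockStart_le I j
      omega
    · rw [blockStart_of_notMem h, Nat.sub_self, add_zero]

lemma lt_of_mem_blockStarts {s : ℕ} (hs : s ∈ blockStarts n I) : s < n :=
  mem_range.mp (mem_sdiff.mp hs).1

lemma blockStart_of_mem_blockStarts {s : ℕ} (hs : s ∈ blockStarts n I) : blockStart I s = s :=
  blockStart_of_notMem (mem_sdiff.mp hs).2

lemma injective_natApply_blockStarts (σ : Equiv.Perm (Fin n)) :
    Function.Injective fun s : blockStarts n I => natApply σ s := fun s t h =>
  Subtype.ext (injOn_natApply σ (lt_of_mem_blockStarts s.2) (lt_of_mem_blockStarts t.2) h)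

/-- A permutation with successions on `I` maps every block onto an interval of values; the
intervals below the value at a block start tile `[0, natApply σ s)`. -/
lemma HasSuccessionsOn.natApply_eq_sum_blockLength (h0 : 0 ∉ I) {σ : Equiv.Perm (Fin n)}
    (hσ : HasSuccessionsOn I σ) (s : blockStarts n I) :
    natApply σ s =
      ∑ t ∈ {t : blockStarts n I | natApply σ t < natApply σ s}, blockLength n I t := by
  set c := natApply σ s
  have hsn := lt_of_mem_blockStarts s.2
  have hfilter : {p ∈ range n | natApply σ p < c}
      = {p ∈ range n | natApply σ (blockStart I p) < c} := by
    refine filter_congr fun p hp => ?_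
    have hblock := hσ.natApply_blockStart_add p
    refine ⟨fun h => by omega, fun h => ?_⟩
    by_contra hcp
    -- otherwise the value `c` is taken inside the block of `p`, at a position other than `s`
    set q := blockStart I p + (c - natApply σ (blockStart I p))
    have hqp : q ≤ p := by omega
    have hstq : blockStart I q = blockStart I p := blockStart_eq_of_le_of_le (by omega) hqp
    have hq := hσ.natApply_blockStart_add q
    rw [hstq] at hq
    have hqs : q = s := injOn_natApply σ (show q < n by simp at hp; omega) hsn (by omega)
    rw [hqs, blockStart_of_mem_blockStarts s.2] at hstq
    rw [← hstq] at h
    exact lt_irrefl _ h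
  calc c = #{p ∈ range n | natApply σ p < c} :=
        (card_filter_natApply_lt σ (natApply_lt σ hsn).le).symm
    _ = #{p ∈ range n | natApply σ (blockStart I p) < c} := by rw [hfilter]
    _ = ∑ t ∈ blockStarts n I with natApply σ t < c, blockLength n I t := by
        rw [card_eq_sum_card_fiberwise (f := blockStart I)
          (t := {t ∈ blockStarts n I | natApply σ t < c}) fun p hp => by
            obtain ⟨hp, hpc⟩ := mem_filter.mp hp
            exact mem_filter.mpr ⟨blockStart_mem_blockStarts h0 (mem_range.mp hp), hpc⟩]
        refine sum_congr rfl fun t ht => ?_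
        rw [filter_filter, blockLength]
        exact congrArg card <| filter_congr fun p _ =>
          ⟨fun h => h.2, fun h => ⟨h ▸ (mem_filter.mp ht).2, h⟩⟩
    _ = ∑ t ∈ {t : blockStarts n I | natApply σ t < c}, blockLength n I t := by
        rw [sum_filter, sum_filter]
        exact (sum_coe_sort _ fun t => if natApply σ t < c then blockLength n I t else 0).symm

/-- `arrangeBlocks` gives the block starting at `s` the `τ s`-th interval of values. -/
abbrev BlockOrder (n : ℕ) (I : Finset ℕ) := blockStarts n I ≃ Fin #(blockStarts n I)

def blockOffset (τ : BlockOrder n I) (s : blockStarts n I) : ℕ :=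
  ∑ t with τ t < τ s, blockLength n I t

lemma blockOffset_add_blockLength_le_of_subset (τ : BlockOrder n I) (s : blockStarts n I)
    {T : Finset (blockStarts n I)} (hT : insert s ({t | τ t < τ s} : Finset _) ⊆ T) :
    blockOffset τ s + blockLength n I s ≤ ∑ t ∈ T, blockLength n I t := by
  rw [blockOffset, add_comm, ← sum_insert (f := fun t : blockStarts n I => blockLength n I t)
    (by simp)]
  exact sum_le_sum_of_subset hT

lemma blockOffset_add_blockLength_le {τ : BlockOrder n I} {s t : blockStarts n I}
    (h : τ s < τ t) : blockOffset τ s + blockLength n I s ≤ blockOffset τ t :=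
  blockOffset_add_blockLength_le_of_subset τ s <| insert_subset (by simpa using h)
    fun u hu => by simpa using ((mem_filter.mp hu).2.trans h)

lemma blockOffset_add_blockLength_le_card (h0 : 0 ∉ I) (τ : BlockOrder n I)
    (s : blockStarts n I) : blockOffset τ s + blockLength n I s ≤ n := by
  have := blockOffset_add_blockLength_le_of_subset τ s (subset_univ _)
  rwa [sum_coe_sort _ fun t => blockLength n I t, sum_blockLength h0] at this

lemma blockOffset_lt_blockOffset_iff {τ : BlockOrder n I} {s t : blockStarts n I} :
    blockOffset τ s < blockOffset τ t ↔ τ s < τ t :=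
  lt_iff_lt_of_injective_of_lt_imp_lt τ.injective fun s t h => by
    have := blockOffset_add_blockLength_le h
    have := blockLength_pos s.2
    omega

def blockOf (h0 : 0 ∉ I) {p : ℕ} (hp : p < n) : blockStarts n I :=
  ⟨blockStart I p, blockStart_mem_blockStarts h0 hp⟩

def arrangedValue (h0 : 0 ∉ I) (τ : BlockOrder n I) (p : Fin n) : ℕ :=
  blockOffset τ (blockOf h0 p.isLt) + (p - blockStart I p)

lemma arrangedValue_lt (h0 : 0 ∉ I) (τ : BlockOrder n I) (p : Fin n) :
    arrangedValue h0 τ p < n := by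
  have : (p : ℕ) - blockStart I p < blockLength n I (blockOf h0 p.isLt) :=
    sub_blockStart_lt_blockLength p.isLt
  have := blockOffset_add_blockLength_le_card h0 τ (blockOf h0 p.isLt)
  unfold arrangedValue
  omega

lemma arrangedValue_lt_of_lt (h0 : 0 ∉ I) (τ : BlockOrder n I) {p q : Fin n}
    (h : τ (blockOf h0 p.isLt) < τ (blockOf h0 q.isLt)) :
    arrangedValue h0 τ p < arrangedValue h0 τ q := by
  have := blockOffset_add_blockLength_le h
  have : (p : ℕ) - blockStart I p < blockLength n I (blockOf h0 p.isLt) :=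
    sub_blockStart_lt_blockLength p.isLt
  unfold arrangedValue
  omega

lemma arrangedValue_injective (h0 : 0 ∉ I) (τ : BlockOrder n I) :
    Function.Injective (arrangedValue h0 τ) := by
  intro p q h
  rcases lt_trichotomy (τ (blockOf h0 p.isLt)) (τ (blockOf h0 q.isLt)) with hlt | heq | hgt
  · exact absurd h (arrangedValue_lt_of_lt h0 τ hlt).ne
  · have hst : blockStart I p = blockStart I q := congrArg Subtype.val (τ.injective heq)
    have := blockStart_le I p
    have := blockStart_le I q
    unfold arrangedValue at h
    rw [τ.injective heq, hst] at h
    exact Fin.ext (by omega)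
  · exact absurd h (arrangedValue_lt_of_lt h0 τ hgt).ne'

noncomputable def arrangeBlocks (h0 : 0 ∉ I) (τ : BlockOrder n I) : Equiv.Perm (Fin n) :=
  Equiv.ofBijective (fun p => ⟨arrangedValue h0 τ p, arrangedValue_lt h0 τ p⟩)
    (Finite.injective_iff_bijective.mp fun _ _ h =>
      arrangedValue_injective h0 τ (congrArg Fin.val h))

lemma natApply_arrangeBlocks (h0 : 0 ∉ I) (τ : BlockOrder n I) {p : ℕ} (hp : p < n) :
    natApply (arrangeBlocks h0 τ) p = blockOffset τ (blockOf h0 hp) + (p - blockStart I p) := by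
  rw [natApply_of_lt _ hp]
  rfl

lemma natApply_arrangeBlocks_blockStart (h0 : 0 ∉ I) (τ : BlockOrder n I)
    (s : blockStarts n I) : natApply (arrangeBlocks h0 τ) s = blockOffset τ s := by
  have hst := blockStart_of_mem_blockStarts s.2
  rw [natApply_arrangeBlocks h0 τ (lt_of_mem_blockStarts s.2), hst, Nat.sub_self, add_zero]
  exact congrArg (blockOffset τ) (Subtype.ext hst)

lemma hasSuccessionsOn_arrangeBlocks (h0 : 0 ∉ I) (hI : I ⊆ range n) (τ : BlockOrder n I) :
    HasSuccessionsOn I (arrangeBlocks h0 τ) := by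
  intro j hj
  have hj1 : j + 1 < n := mem_range.mp (hI hj)
  have hst := blockStart_succ_of_mem hj
  rw [natApply_arrangeBlocks h0 τ hj1, natApply_arrangeBlocks h0 τ (Nat.lt_of_succ_lt hj1),
    show blockOf h0 hj1 = blockOf h0 (Nat.lt_of_succ_lt hj1) from Subtype.ext hst, hst]
  have := blockStart_le I j
  omega

def startRank (σ : Equiv.Perm (Fin n)) (s : blockStarts n I) : ℕ :=
  #{t : blockStarts n I | natApply σ t < natApply σ s}

lemma startRank_lt_startRank (σ : Equiv.Perm (Fin n)) {s t : blockStarts n I}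
    (h : natApply σ s < natApply σ t) : startRank σ s < startRank σ t := by
  refine card_lt_card <|
    (ssubset_iff_of_subset fun u hu => ?_).mpr ⟨s, by simpa using h, by simp⟩
  simp only [mem_filter, mem_univ, true_and] at hu ⊢
  exact hu.trans h

lemma startRank_lt_card (σ : Equiv.Perm (Fin n)) (s : blockStarts n I) :
    startRank σ s < #(blockStarts n I) := by
  rw [← Fintype.card_coe, ← card_univ]
  exact card_lt_card ((ssubset_iff_of_subset (subset_univ _)).mpr ⟨s, mem_univ _, by simp⟩)

noncomputable def rankOrder (σ : Equiv.Perm (Fin n)) : BlockOrder n I :=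
  Equiv.ofBijective (fun s => ⟨startRank σ s, startRank_lt_card σ s⟩) <|
    (Fintype.bijective_iff_injective_and_card _).mpr ⟨fun s t h => by
      have h' : startRank σ s = startRank σ t := congrArg Fin.val h
      refine injective_natApply_blockStarts σ (le_antisymm ?_ ?_)
      · exact not_lt.mp fun hlt => (startRank_lt_startRank σ hlt).ne' h'
      · exact not_lt.mp fun hlt => (startRank_lt_startRank σ hlt).ne h', by simp⟩

lemma rankOrder_lt_rankOrder_iff (σ : Equiv.Perm (Fin n)) {s t : blockStarts n I} :
    rankOrder σ s < rankOrder σ t ↔ natApply σ s < natApply σ t :=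
  lt_iff_lt_of_injective_of_lt_imp_lt (injective_natApply_blockStarts σ) fun _ _ =>
    startRank_lt_startRank σ

lemma rankOrder_arrangeBlocks (h0 : 0 ∉ I) (τ : BlockOrder n I) :
    rankOrder (arrangeBlocks h0 τ) = τ := by
  ext s
  change startRank _ s = _
  simp only [startRank, natApply_arrangeBlocks_blockStart, blockOffset_lt_blockOffset_iff]
  exact card_filter_apply_lt_apply τ s

lemma HasSuccessionsOn.arrangeBlocks_rankOrder (h0 : 0 ∉ I) {σ : Equiv.Perm (Fin n)}
    (hσ : HasSuccessionsOn I σ) : arrangeBlocks h0 (rankOrder σ) = σ := by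
  have hoffset : ∀ s, blockOffset (rankOrder σ) s = natApply σ s := fun s => by
    simp only [blockOffset, rankOrder_lt_rankOrder_iff]
    exact (hσ.natApply_eq_sum_blockLength h0 s).symm
  ext p
  rw [← natApply_val, ← natApply_val, natApply_arrangeBlocks h0 _ p.isLt, hoffset]
  exact hσ.natApply_blockStart_add p

noncomputable def hasSuccessionsOnEquivBlockOrder (h0 : 0 ∉ I) (hI : I ⊆ range n) :
    {σ : Equiv.Perm (Fin n) // HasSuccessionsOn I σ} ≃ BlockOrder n I where
  toFun σ := rankOrder σ.1
  invFun τ := ⟨arrangeBlocks h0 τ, hasSuccessionsOn_arrangeBlocks h0 hI τ⟩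
  left_inv σ := Subtype.ext (σ.2.arrangeBlocks_rankOrder h0)
  right_inv := rankOrder_arrangeBlocks h0

theorem card_hasSuccessionsOn (h0 : 0 ∉ I) (hI : I ⊆ range n) :
    Nat.card {σ : Equiv.Perm (Fin n) // HasSuccessionsOn I σ} =
      (#(blockStarts n I)).factorial := by
  rw [Nat.card_congr (hasSuccessionsOnEquivBlockOrder h0 hI), Nat.card_eq_fintype_card,
    Fintype.card_equiv (blockStarts n I).equivFin, Fintype.card_coe]

end Blocks

section SuccessionsAndFixedPoints

variable {n : ℕ} {I : Finset ℕ}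

lemma pv_eq_natApply (σ : Equiv.Perm (Fin n)) {i : ℕ} (h1 : 1 ≤ i) (h2 : i ≤ n) :
    pv σ i = natApply σ (i - 1) + 1 := by
  rw [pv, dif_pos ⟨h1, h2⟩, natApply_of_lt σ (by omega)]

lemma subset_Mset_iff (hI : I ⊆ Icc 1 (n - 1)) (σ : Equiv.Perm (Fin n)) :
    I ⊆ Mset σ ↔ HasSuccessionsOn I σ := by
  have hpv : ∀ j, j + 1 ∈ I →
      (pv σ (j + 1) + 1 = pv σ (j + 1 + 1) ↔ natApply σ (j + 1) = natApply σ j + 1) := by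
    intro j hj
    have := mem_Icc.mp (hI hj)
    rw [pv_eq_natApply σ (by omega) (by omega), pv_eq_natApply σ (by omega) (by omega)]
    simp only [Nat.add_sub_cancel]
    omega
  refine ⟨fun h j hj => (hpv j hj).mp (mem_filter.mp (h hj)).2, fun h i hi => ?_⟩
  obtain ⟨j, rfl⟩ : ∃ j, i = j + 1 := Nat.exists_eq_add_one.mpr (mem_Icc.mp (hI hi)).1
  exact mem_filter.mpr ⟨hI hi, (hpv j hi).mpr (h j hi)⟩

lemma subset_Gset_iff (hI : I ⊆ Icc 1 (n - 1)) (σ : Equiv.Perm (Fin n)) :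
    I ⊆ Gset σ ↔ ∀ a : Fin n, (a : ℕ) + 1 ∈ I → σ a = a := by
  refine ⟨fun h a ha => Fin.ext ?_, fun h i hi => mem_filter.mpr ⟨hI hi, ?_⟩⟩
  · have := (mem_filter.mp (h ha)).2
    rwa [pv_eq_natApply σ (by omega) (by omega), Nat.add_sub_cancel, natApply_val,
      Nat.add_right_cancel_iff] at this
  · have := mem_Icc.mp (hI hi)
    rw [pv_eq_natApply σ this.1 (by omega), natApply_of_lt σ (by omega),
      h ⟨i - 1, by omega⟩ (by simpa [Nat.sub_add_cancel this.1] using hi)]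
    exact Nat.sub_add_cancel this.1

lemma card_subset_Mset (hI : I ⊆ Icc 1 (n - 1)) :
    #{σ : Equiv.Perm (Fin n) | I ⊆ Mset σ} = (n - #I).factorial := by
  have h0 : 0 ∉ I := fun h => by simpa using hI h
  have hI' : I ⊆ range n := fun i hi => by have := mem_Icc.mp (hI hi); simp; omega
  rw [← Fintype.card_subtype, ← Nat.card_eq_fintype_card,
    Nat.card_congr (Equiv.subtypeEquivRight (subset_Mset_iff hI)), card_hasSuccessionsOn h0 hI',
    card_blockStarts hI']

lemma card_subset_Gset (hI : I ⊆ Icc 1 (n - 1)) :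
    #{σ : Equiv.Perm (Fin n) | I ⊆ Gset σ} = (n - #I).factorial := by
  have hshift : #{a : Fin n | (a : ℕ) + 1 ∈ I} = #I := by
    rw [← card_image_of_injective _ fun a b h => Fin.ext (Nat.succ_injective h)]
    congr 1
    ext i
    simp only [mem_image, mem_filter, mem_univ, true_and]
    refine ⟨fun ⟨a, ha, hai⟩ => hai ▸ ha, fun hi => ?_⟩
    have := mem_Icc.mp (hI hi)
    exact ⟨⟨i - 1, by omega⟩, by simpa [Nat.sub_add_cancel this.1] using hi, by simp; omega⟩
  have hfixing : {σ : Equiv.Perm (Fin n) // I ⊆ Gset σ}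
      ≃ Equiv.Perm {a : Fin n // (a : ℕ) + 1 ∉ I} :=
    (Equiv.subtypeEquivRight fun σ => (subset_Gset_iff hI σ).trans (by simp only [not_not])).trans
      (Equiv.Perm.subtypeEquivSubtypePerm _).symm
  rw [← Fintype.card_subtype, Fintype.card_congr hfixing, Fintype.card_perm,
    Fintype.card_subtype, filter_not, card_sdiff_of_subset (filter_subset _ _), card_univ,
    Fintype.card_fin, hshift]

end SuccessionsAndFixedPoints

theorem diaconis_evans_graham_general (n : ℕ) (I : Finset ℕ)
    (hI : I ⊆ Finset.Icc 1 (n - 1)) :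
    ((Finset.univ : Finset (Equiv.Perm (Fin n))).filter (fun σ => Mset σ = I)).card =
    ((Finset.univ : Finset (Equiv.Perm (Fin n))).filter (fun σ => Gset σ = I)).card :=
  card_filter_eq_eq_of_card_filter_subset_eq (fun _ => filter_subset _ _)
    (fun _ => filter_subset _ _)
    (fun _ hJ => (card_subset_Mset hJ).trans (card_subset_Gset hJ).symm) hI

/-- The Diaconis–Evans–Graham theorem. -/
theorem diaconis_evans_graham (n : ℕ) (hn : 1 ≤ n) (I : Finset ℕ)
    (hI : I ⊆ Finset.Icc 1 (n - 1)) :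
    ((Finset.univ : Finset (Equiv.Perm (Fin n))).filter (fun σ => Mset σ = I)).card =
    ((Finset.univ : Finset (Equiv.Perm (Fin n))).filter (fun σ => Gset σ = I)).card :=
  diaconis_evans_graham_general n I hI
end
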